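/- arXiv:1202.3322 — 9 statements merged into one kernel-verified Lean document; each statement's English description precedes it below -/
import Mathlib

section
/- Let A be an n×n complex Hermitian matrix with eigenvalues λ₁ ≥ λ₂ ≥ ... ≥ λ_n listed in decreasing order with multiplicity, and let q be a natural number with 1 ≤ q ≤ n. Then for every orthonormal family x₁, ..., x_q of vectors in ℂⁿ one has ∑_{i=1}^{q} ⟨x_i, A x_i⟩ ≤ ∑_{i=1}^{q} λ_i, and this bound is attained: there exists an orthonormal family x₁, ..., x_q, consisting of eigenvectors of A for the eigenvalues λ₁, ..., λ_q respectively, with ∑_{i=1}^{q} ⟨x_i, A x_i⟩ = ∑_{i=1}^{q} λ_i. -/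
/-!
Expand each `xᵢ` in an orthonormal eigenbasis `(u_j)` of `A`: then
`∑ᵢ ⟨xᵢ, A xᵢ⟩ = ∑_j λ_j c_j` with `c_j = ∑ᵢ |⟨u_j, xᵢ⟩|²`. Bessel's inequality gives
`0 ≤ c_j ≤ 1` and Parseval's identity gives `∑_j c_j = q`; among such weights a sum with
decreasing coefficients `λ_j` is largest when the weight sits on the first `q` indices.
The eigenvectors `u₁, …, u_q` attain the bound.
-/

open Matrix ComplexOrder
open scoped InnerProductSpace

theorem sum_mul_le_sum_of_forall_le {ι : Type*} [Fintype ι] (μ d : ι → ℝ)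
    (S : Finset ι) (hS : ∀ k ∈ S, ∀ l ∉ S, μ l ≤ μ k)
    (hd0 : ∀ k, 0 ≤ d k) (hd1 : ∀ k, d k ≤ 1) (hsum : ∑ k, d k = S.card) :
    ∑ k, μ k * d k ≤ ∑ k ∈ S, μ k := by
  classical
  rcases S.eq_empty_or_nonempty with rfl | hne
  · have hd : d = 0 := (Fintype.sum_eq_zero_iff_of_nonneg hd0).mp (by simpa using hsum)
    simp [hd]
  -- with `t = min_S μ`, termwise `(μ k - t) (d k - 𝟙_S k) ≤ 0`, and `d`, `𝟙_S` have equal mass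
  set t := S.inf' hne μ
  have key : ∀ k,
      μ k * d k - (if k ∈ S then μ k else 0) ≤ t * (d k - if k ∈ S then 1 else 0) := by
    intro k
    by_cases hk : k ∈ S
    · have : t ≤ μ k := S.inf'_le μ hk
      simp only [hk, if_true]
      nlinarith [hd1 k]
    · have : μ k ≤ t := S.le_inf' hne μ fun m hm => hS m hm k hk
      simp only [hk, if_false]
      nlinarith [hd0 k]
  have := Finset.sum_le_sum fun k (_ : k ∈ Finset.univ) => key k
  simp only [Finset.sum_sub_distrib, ← Finset.mul_sum, Finset.sum_ite_mem, Finset.univ_inter,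
    Finset.sum_const, nsmul_eq_mul, mul_one, hsum, sub_self, mul_zero] at this
  linarith

theorem Antitone.sum_mul_le_sum_castLE {n q : ℕ} {μ : Fin n → ℝ} (hμ : Antitone μ)
    (hqn : q ≤ n) (d : Fin n → ℝ) (hd0 : ∀ k, 0 ≤ d k) (hd1 : ∀ k, d k ≤ 1)
    (hsum : ∑ k, d k = q) :
    ∑ k, μ k * d k ≤ ∑ i : Fin q, μ (Fin.castLE hqn i) := by
  set S := Finset.univ.map (Fin.castLEEmb hqn)
  have hmem : ∀ k, k ∈ S ↔ (k : ℕ) < q := fun k => by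
    simp only [S, Finset.mem_map, Finset.mem_univ, true_and, Fin.coe_castLEEmb]
    exact ⟨by rintro ⟨i, rfl⟩; exact i.2, fun hk => ⟨⟨k, hk⟩, rfl⟩⟩
  have hS : ∀ k ∈ S, ∀ l ∉ S, μ l ≤ μ k := fun k hk l hl =>
    hμ (Fin.le_def.mpr (by rw [hmem] at hk hl; omega))
  have hcard : S.card = q := by simp [S]
  simpa [S] using sum_mul_le_sum_of_forall_le μ d S hS hd0 hd1 (by rw [hsum, hcard])

section InnerProductSpace

variable {𝕜 E ι κ : Type*} [RCLike 𝕜] [NormedAddCommGroup E] [InnerProductSpace 𝕜 E]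
  [Fintype ι] [Fintype κ]

theorem OrthonormalBasis.inner_map_self_eq (b : OrthonormalBasis ι 𝕜 E) {T : E →ₗ[𝕜] E}
    {μ : ι → ℝ} (hT : ∀ j, T (b j) = (μ j : 𝕜) • b j) (x : E) :
    ⟪x, T x⟫_𝕜 = ((∑ j, μ j * ‖⟪b j, x⟫_𝕜‖ ^ 2 : ℝ) : 𝕜) := by
  nth_rw 2 [← b.sum_repr' x]
  simp only [map_sum, map_smul, hT, smul_smul, inner_sum, inner_smul_right]
  push_cast
  refine Finset.sum_congr rfl fun j _ => ?_
  rw [← inner_conj_symm x (b j), ← RCLike.mul_conj]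
  ring

theorem Orthonormal.sum_sq_norm_inner_le_one {x : κ → E} (hx : Orthonormal 𝕜 x)
    (b : OrthonormalBasis ι 𝕜 E) (j : ι) : ∑ i, ‖⟪b j, x i⟫_𝕜‖ ^ 2 ≤ 1 := by
  simpa [norm_inner_symm (b j), b.orthonormal.1 j] using
    hx.sum_inner_products_le (b j) (s := Finset.univ)

theorem Orthonormal.sum_sum_sq_norm_inner {x : κ → E} (hx : Orthonormal 𝕜 x)
    (b : OrthonormalBasis ι 𝕜 E) : ∑ j, ∑ i, ‖⟪b j, x i⟫_𝕜‖ ^ 2 = Fintype.card κ := by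
  rw [Finset.sum_comm]
  simp [b.sum_sq_norm_inner_right, hx.1]

theorem OrthonormalBasis.sum_inner_map_le {n q : ℕ} (b : OrthonormalBasis (Fin n) 𝕜 E)
    {T : E →ₗ[𝕜] E} {μ : Fin n → ℝ} (hμ : Antitone μ) (hT : ∀ j, T (b j) = (μ j : 𝕜) • b j)
    (hqn : q ≤ n) {x : Fin q → E} (hx : Orthonormal 𝕜 x) :
    ∑ i, ⟪x i, T (x i)⟫_𝕜 ≤ ((∑ i : Fin q, μ (Fin.castLE hqn i) : ℝ) : 𝕜) := by
  have hsum : ∑ i, ⟪x i, T (x i)⟫_𝕜 = ((∑ j, μ j * ∑ i, ‖⟪b j, x i⟫_𝕜‖ ^ 2 : ℝ) : 𝕜) := by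
    simp only [b.inner_map_self_eq hT, Finset.mul_sum]
    push_cast
    exact Finset.sum_comm
  rw [hsum, RCLike.ofReal_le_ofReal]
  exact hμ.sum_mul_le_sum_castLE hqn _ (fun j => by positivity) (hx.sum_sq_norm_inner_le_one b)
    (by simpa using hx.sum_sum_sq_norm_inner b)

end InnerProductSpace

theorem star_dotProduct_eq_inner {𝕜 ι : Type*} [RCLike 𝕜] [Fintype ι] (x y : ι → 𝕜) :
    star x ⬝ᵥ y = ⟪(WithLp.toLp 2 x : EuclideanSpace 𝕜 ι), WithLp.toLp 2 y⟫_𝕜 := by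
  rw [EuclideanSpace.inner_toLp_toLp, dotProduct_comm]

theorem orthonormal_toLp_iff {𝕜 ι κ : Type*} [RCLike 𝕜] [Fintype ι] [DecidableEq κ]
    {x : κ → ι → 𝕜} :
    Orthonormal 𝕜 (fun i => (WithLp.toLp 2 (x i) : EuclideanSpace 𝕜 ι)) ↔
      ∀ i j, star (x i) ⬝ᵥ x j = if i = j then 1 else 0 := by
  simp only [orthonormal_iff_ite, star_dotProduct_eq_inner]

theorem fan_maximum_principle_general {n : ℕ} (A : Matrix (Fin n) (Fin n) ℂ) (hA : A.IsHermitian)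
    (μ : Fin n → ℝ) (hμ : Antitone μ)
    (hperm : ∃ e : Equiv.Perm (Fin n), ∀ i, μ (e i) = hA.eigenvalues i)
    (q : ℕ) (hqn : q ≤ n) :
    (∀ x : Fin q → (Fin n → ℂ),
      (∀ i j, star (x i) ⬝ᵥ x j = if i = j then 1 else 0) →
      ∑ i, star (x i) ⬝ᵥ A.mulVec (x i) ≤ ((∑ i : Fin q, μ (Fin.castLE hqn i) : ℝ) : ℂ)) ∧
    (∃ x : Fin q → (Fin n → ℂ),
      (∀ i j, star (x i) ⬝ᵥ x j = if i = j then 1 else 0) ∧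
      (∀ i, A.mulVec (x i) = (μ (Fin.castLE hqn i) : ℂ) • x i) ∧
      ∑ i, star (x i) ⬝ᵥ A.mulVec (x i) = ((∑ i : Fin q, μ (Fin.castLE hqn i) : ℝ) : ℂ)) := by
  obtain ⟨e, he⟩ := hperm
  set b := hA.eigenvectorBasis.reindex e with hb
  have hT : ∀ k, toLpLin 2 2 A (b k) = (μ k : ℂ) • b k := fun k => by
    rw [toLpLin_apply, hb, OrthonormalBasis.reindex_apply, hA.mulVec_eigenvectorBasis, ← he,
      e.apply_symm_apply]
    rfl
  refine ⟨fun x hx => ?_, ?_⟩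
  · have hle := b.sum_inner_map_le hμ hT hqn (orthonormal_toLp_iff.mpr hx)
    simp only [toLpLin_toLp, ← star_dotProduct_eq_inner] at hle
    exact hle
  · set x : Fin q → Fin n → ℂ := fun i => b (Fin.castLE hqn i)
    have hx : ∀ i j, star (x i) ⬝ᵥ x j = if i = j then 1 else 0 :=
      orthonormal_toLp_iff.mp (b.orthonormal.comp _ (Fin.castLE_injective hqn))
    have hAx : ∀ i, A *ᵥ x i = (μ (Fin.castLE hqn i) : ℂ) • x i := fun i =>
      congrArg WithLp.ofLp (hT _)
    refine ⟨x, hx, hAx, ?_⟩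
    simp [hAx, hx]

/-- Fan's theorem: for a Hermitian matrix `A` with eigenvalues `μ` listed in decreasing
order with multiplicity, the sum `∑ ⟨xᵢ, A xᵢ⟩` over an orthonormal family `x₁, …, x_q`
is at most `∑_{i=1}^q μᵢ`, and the bound is attained by an orthonormal family of
eigenvectors for the eigenvalues `μ₁, …, μ_q`. -/
theorem fan_maximum_principle {n : ℕ} (A : Matrix (Fin n) (Fin n) ℂ) (hA : A.IsHermitian)
    (μ : Fin n → ℝ) (hμ : Antitone μ)
    (hperm : ∃ e : Equiv.Perm (Fin n), ∀ i, μ (e i) = hA.eigenvalues i)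
    (q : ℕ) (hq1 : 1 ≤ q) (hqn : q ≤ n) :
    (∀ x : Fin q → (Fin n → ℂ),
      (∀ i j, star (x i) ⬝ᵥ x j = if i = j then 1 else 0) →
      ∑ i, star (x i) ⬝ᵥ A.mulVec (x i) ≤ ((∑ i : Fin q, μ (Fin.castLE hqn i) : ℝ) : ℂ)) ∧
    (∃ x : Fin q → (Fin n → ℂ),
      (∀ i j, star (x i) ⬝ᵥ x j = if i = j then 1 else 0) ∧
      (∀ i, A.mulVec (x i) = (μ (Fin.castLE hqn i) : ℂ) • x i) ∧
      ∑ i, star (x i) ⬝ᵥ A.mulVec (x i) = ((∑ i : Fin q, μ (Fin.castLE hqn i) : ℝ) : ℂ)) :=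
  fan_maximum_principle_general A hA μ hμ hperm q hqn
end

section
/- Let ρ be a d×d density matrix and let f₁, ..., f_m be a generalized measurement on ℂ^d. Then the expected spectrum of Alice's local state after her measurement majorizes the spectrum of her current state: for every k with 1 ≤ k ≤ d, ∑_{j=1}^{m} ∑_{i=1}^{k} λ_i(f_j * ρ * f_jᴴ) ≥ ∑_{i=1}^{k} λ_i(ρ). (Here each f_j ρ f_jᴴ is positive semidefinite Hermitian, and λ_i(f_j ρ f_jᴴ) equals p_j times the i-th eigenvalue of the normalized post-measurement state when p_j = trace(f_j ρ f_jᴴ) > 0.) -/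
/-!
Write `ρ = R²` with `R` Hermitian and put `X_j = f_j R`. Then `ρ = ∑_j X_jᴴ X_j`, while
`f_j ρ f_jᴴ = X_j X_jᴴ` has the same characteristic polynomial, hence the same eigenvalues, as
`X_jᴴ X_j`.

By Ky Fan's maximum principle, the sum of the `k` largest eigenvalues of a Hermitian `B` is the
maximum of `re tr (T B)` over `0 ≤ T ≤ 1` with `tr T = k`: in an eigenbasis of `B` this is
`∑ c_i λ_i` with weights `c_i ∈ [0, 1]` of total mass `k`, and the maximum is attained at the
spectral projection onto `k` top eigenvectors. Taking `T` to be that projection for `ρ`,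
`∑_{i ≤ k} λ_i(ρ) = re tr (T ρ) = ∑_j re tr (T X_jᴴ X_j) ≤ ∑_j ∑_{i ≤ k} λ_i(X_jᴴ X_j)`.
-/

open Matrix ComplexOrder Finset

theorem sum_mul_le_sum_of_forall_notMem_le {ι : Type*} [Fintype ι] {s : Finset ι} {σ c : ι → ℝ}
    (hσ : ∀ i ∈ s, ∀ j ∉ s, σ j ≤ σ i) (hc0 : ∀ i, 0 ≤ c i) (hc1 : ∀ i, c i ≤ 1)
    (hc : ∑ i, c i = #s) : ∑ i, c i * σ i ≤ ∑ i ∈ s, σ i := by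
  classical
  rcases s.eq_empty_or_nonempty with rfl | hs
  · have hc_zero : ∀ i, c i = 0 := by
      simpa [Finset.sum_eq_zero_iff_of_nonneg fun i _ => hc0 i] using hc
    simp [hc_zero]
  set t := s.inf' hs σ
  have key : ∀ i, c i * σ i ≤ (if i ∈ s then σ i - t else 0) + t * c i := by
    intro i
    split_ifs with hi
    · nlinarith [s.inf'_le σ hi, hc1 i]
    · nlinarith [s.le_inf' hs σ fun j hj => hσ j hj i hi, hc0 i]
  calc ∑ i, c i * σ i ≤ ∑ i, ((if i ∈ s then σ i - t else 0) + t * c i) :=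
        sum_le_sum fun i _ => key i
    _ = ∑ i ∈ s, σ i := by
        rw [sum_add_distrib, ← mul_sum, hc, sum_ite_mem, univ_inter, sum_sub_distrib,
          sum_const, nsmul_eq_mul]
        ring

theorem Antitone.exists_finset_sum_castLE_eq {d k : ℕ} (hk : k ≤ d) {σ τ : Fin d → ℝ}
    (hσ : Antitone σ) (hστ : ∃ e : Equiv.Perm (Fin d), ∀ i, σ (e i) = τ i) :
    ∃ s : Finset (Fin d), #s = k ∧ (∀ i ∈ s, ∀ j ∉ s, τ j ≤ τ i) ∧
      ∑ i : Fin k, σ (Fin.castLE hk i) = ∑ i ∈ s, τ i := by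
  obtain ⟨e, he⟩ := hστ
  have hmem : ∀ i, i ∈ (univ.map (Fin.castLEEmb hk)).map e.symm.toEmbedding ↔ (e i : ℕ) < k := by
    intro i
    simp only [mem_map, mem_univ, true_and, Fin.castLEEmb_apply, Equiv.toEmbedding_apply,
      Equiv.symm_apply_eq, exists_exists_eq_and]
    exact ⟨fun ⟨a, ha⟩ => ha ▸ a.isLt, fun h => ⟨⟨e i, h⟩, rfl⟩⟩
  refine ⟨(univ.map (Fin.castLEEmb hk)).map e.symm.toEmbedding, by simp, fun i hi j hj => ?_, ?_⟩
  · rw [← he, ← he]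
    exact hσ (Fin.le_def.2 (by rw [hmem] at hi hj; omega))
  · simp [sum_map, ← he]

open scoped MatrixOrder

namespace Matrix.IsHermitian

variable {𝕜 : Type*} [RCLike 𝕜] {n : Type*} [Fintype n] [DecidableEq n] {B : Matrix n n 𝕜}

theorem trace_mul_eq_sum_diag_mul_eigenvalues (hB : B.IsHermitian) (T : Matrix n n 𝕜) :
    (T * B).trace = ∑ i, (star (hB.eigenvectorUnitary : Matrix n n 𝕜) * T *
      hB.eigenvectorUnitary) i i * hB.eigenvalues i := by
  conv_lhs => rw [hB.spectral_theorem, Unitary.conjStarAlgAut_apply]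
  rw [← Matrix.mul_assoc, ← Matrix.mul_assoc, trace_mul_cycle, ← Matrix.mul_assoc]
  simp [trace, mul_diagonal]

theorem re_trace_mul_le_sum_eigenvalues (hB : B.IsHermitian) {T : Matrix n n 𝕜} (hT0 : 0 ≤ T)
    (hT1 : T ≤ 1) {s : Finset n}
    (hs : ∀ i ∈ s, ∀ j ∉ s, hB.eigenvalues j ≤ hB.eigenvalues i)
    (htr : RCLike.re T.trace = #s) :
    RCLike.re (T * B).trace ≤ ∑ i ∈ s, hB.eigenvalues i := by
  set U : Matrix n n 𝕜 := ↑hB.eigenvectorUnitary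
  have hUU : star U * U = 1 := Unitary.coe_star_mul_self _
  have hUU' : U * star U = 1 := Unitary.coe_mul_star_self _
  set G := star U * T * U
  have hG0 : 0 ≤ G := by simpa using star_left_conjugate_le_conjugate hT0 U
  have hG1 : G ≤ 1 := by simpa [hUU] using star_left_conjugate_le_conjugate hT1 U
  have hGtr : G.trace = T.trace := by
    rw [trace_mul_cycle, hUU', Matrix.one_mul]
  rw [trace_mul_eq_sum_diag_mul_eigenvalues, map_sum]
  simp only [RCLike.re_mul_ofReal]
  refine sum_mul_le_sum_of_forall_notMem_le hs (fun i => ?_) (fun i => ?_) ?_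
  · exact (RCLike.nonneg_iff.1 hG0.posSemidef.diag_nonneg).1
  · simpa using (RCLike.nonneg_iff.1 (Matrix.le_iff.1 hG1).diag_nonneg).1
  · rw [← map_sum, ← htr, ← hGtr]; rfl

theorem exists_re_trace_mul_eq_sum_eigenvalues (hB : B.IsHermitian) (s : Finset n) :
    ∃ P : Matrix n n 𝕜, 0 ≤ P ∧ P ≤ 1 ∧ RCLike.re P.trace = #s ∧
      RCLike.re (P * B).trace = ∑ i ∈ s, hB.eigenvalues i := by
  set U : Matrix n n 𝕜 := ↑hB.eigenvectorUnitary
  have hUU : star U * U = 1 := Unitary.coe_star_mul_self _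
  have hUU' : U * star U = 1 := Unitary.coe_mul_star_self _
  set D : Matrix n n 𝕜 := diagonal fun i => if i ∈ s then 1 else 0
  have hD0 : 0 ≤ D := by
    rw [nonneg_iff_posSemidef, posSemidef_diagonal_iff]
    intro i; split_ifs <;> simp
  have hD1 : D ≤ 1 := by
    rw [Matrix.le_iff, ← diagonal_one, diagonal_sub, posSemidef_diagonal_iff]
    intro i; split_ifs <;> simp
  have hUDU : star U * (U * D * star U) * U = D := by
    simp only [← Matrix.mul_assoc, hUU, Matrix.one_mul]
    rw [Matrix.mul_assoc, hUU, Matrix.mul_one]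
  refine ⟨U * D * star U, by simpa using star_right_conjugate_le_conjugate hD0 U,
    by simpa [hUU'] using star_right_conjugate_le_conjugate hD1 U, ?_, ?_⟩
  · rw [trace_mul_cycle, hUU, Matrix.one_mul]
    simp [D, trace_diagonal]
  · rw [hB.trace_mul_eq_sum_diag_mul_eigenvalues, hUDU, map_sum]
    simp [D, apply_ite, sum_ite_mem]

end Matrix.IsHermitian

theorem expected_spectrum_majorizes_measured_general {d m : ℕ}
    (ρ : Matrix (Fin d) (Fin d) ℂ) (hρ : ρ.PosSemidef)
    (f : Fin m → Matrix (Fin d) (Fin d) ℂ)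
    (hf : ∑ j : Fin m, (f j)ᴴ * f j = 1)
    (hherm : ∀ j, (f j * ρ * (f j)ᴴ).IsHermitian)
    (μ : Fin m → Fin d → ℝ) (hμa : ∀ j, Antitone (μ j))
    (hμp : ∀ j, ∃ e : Equiv.Perm (Fin d), ∀ i, μ j (e i) = (hherm j).eigenvalues i)
    (ν : Fin d → ℝ) (hνa : Antitone ν)
    (hνp : ∃ e : Equiv.Perm (Fin d), ∀ i, ν (e i) = hρ.isHermitian.eigenvalues i) :
    ∀ (k : ℕ), 1 ≤ k → ∀ (hk : k ≤ d),
      ∑ i : Fin k, ν (Fin.castLE hk i) ≤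
        ∑ j : Fin m, ∑ i : Fin k, μ j (Fin.castLE hk i) := by
  intro k _ hk
  obtain ⟨R, hRh, hRR⟩ : ∃ R : Matrix (Fin d) (Fin d) ℂ, Rᴴ = R ∧ R * R = ρ :=
    ⟨CFC.sqrt ρ, (CFC.sqrt_nonneg ρ).posSemidef.isHermitian, CFC.sqrt_mul_sqrt_self ρ hρ.nonneg⟩
  set X : Fin m → Matrix (Fin d) (Fin d) ℂ := fun j => f j * R
  have hXX : ∀ j, (X j)ᴴ * X j = R * ((f j)ᴴ * f j) * R := fun j => by
    simp only [X, conjTranspose_mul, hRh, Matrix.mul_assoc]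
  have hρ_sum : ∑ j, (X j)ᴴ * X j = ρ := by
    simp only [hXX, ← sum_mul, ← mul_sum, hf, Matrix.mul_one, hRR]
  have hB : ∀ j, ((X j)ᴴ * X j).IsHermitian := fun j => isHermitian_conjTranspose_mul_self _
  have hspec : ∀ j, (hherm j).eigenvalues = (hB j).eigenvalues := fun j =>
    (IsHermitian.eigenvalues_eq_eigenvalues_iff _ _).2 <| by
      rw [show f j * ρ * (f j)ᴴ = X j * (X j)ᴴ by
        simp only [X, conjTranspose_mul, hRh, ← hRR, Matrix.mul_assoc], charpoly_mul_comm]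
  obtain ⟨s, hs_card, hs_sep, hν_sum⟩ := hνa.exists_finset_sum_castLE_eq hk hνp
  obtain ⟨P, hP0, hP1, hP_tr, hPρ⟩ := hρ.isHermitian.exists_re_trace_mul_eq_sum_eigenvalues s
  calc ∑ i : Fin k, ν (Fin.castLE hk i) = RCLike.re (P * ρ).trace := by rw [hν_sum, hPρ]
    _ = ∑ j, RCLike.re (P * ((X j)ᴴ * X j)).trace := by
      rw [← hρ_sum, mul_sum, trace_sum, map_sum]
    _ ≤ ∑ j, ∑ i : Fin k, μ j (Fin.castLE hk i) := sum_le_sum fun j _ => by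
      obtain ⟨t, ht_card, ht_sep, hμ_sum⟩ :=
        (hμa j).exists_finset_sum_castLE_eq hk (hspec j ▸ hμp j)
      rw [hμ_sum]
      exact (hB j).re_trace_mul_le_sum_eigenvalues hP0 hP1 ht_sep (by rw [hP_tr, hs_card, ht_card])

/-- The expected spectrum of Alice's local state after a generalized measurement
`f₁, …, f_m` majorizes the spectrum of her current density matrix `ρ`: for every `k`,
`∑_j ∑_{i=1}^k λᵢ(f_j ρ f_jᴴ) ≥ ∑_{i=1}^k λᵢ(ρ)`. -/
theorem expected_spectrum_majorizes_measured {d m : ℕ}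
    (ρ : Matrix (Fin d) (Fin d) ℂ) (hρ : ρ.PosSemidef) (hρtr : ρ.trace = 1)
    (f : Fin m → Matrix (Fin d) (Fin d) ℂ)
    (hf : ∑ j : Fin m, (f j)ᴴ * f j = 1)
    (hherm : ∀ j, (f j * ρ * (f j)ᴴ).IsHermitian)
    (μ : Fin m → Fin d → ℝ) (hμa : ∀ j, Antitone (μ j))
    (hμp : ∀ j, ∃ e : Equiv.Perm (Fin d), ∀ i, μ j (e i) = (hherm j).eigenvalues i)
    (ν : Fin d → ℝ) (hνa : Antitone ν)
    (hνp : ∃ e : Equiv.Perm (Fin d), ∀ i, ν (e i) = hρ.isHermitian.eigenvalues i) :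
    ∀ (k : ℕ), 1 ≤ k → ∀ (hk : k ≤ d),
      ∑ i : Fin k, ν (Fin.castLE hk i) ≤
        ∑ j : Fin m, ∑ i : Fin k, μ j (Fin.castLE hk i) :=
  expected_spectrum_majorizes_measured_general ρ hρ f hf hherm μ hμa hμp ν hνa hνp
end

section
/- Let α and β be finite index types with β of cardinality d, let σ : Matrix (α × β) (α × β) ℂ be a density matrix, and let f₁, ..., f_m be a generalized measurement on the first factor, i.e., matrices in Matrix α α ℂ with ∑_{j=1}^m f_jᴴ f_j = I. Then the expected spectrum of Bob's local state after Alice's measurement majorizes the spectrum of Bob's current local state: for every k with 1 ≤ k ≤ d, ∑_{j=1}^{m} ∑_{i=1}^{k} λ_i(Tr₁((f_j ⊗ I) * σ * (f_j ⊗ I)ᴴ)) ≥ ∑_{i=1}^{k} λ_i(Tr₁(σ)). -/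
open Matrix Kronecker ComplexOrder

/-- Partial trace over the first tensor factor. -/
noncomputable def ptrace1 {α β : Type*} [Fintype α]
    (M : Matrix (α × β) (α × β) ℂ) : Matrix β β ℂ :=
  Matrix.of fun i j => ∑ k : α, M (k, i) (k, j)

/-!
Ky Fan's maximum principle: for a Hermitian `B` and an orthogonal projection `P` of rank `k`,
`re tr(P B)` is at most the sum of the `k` largest eigenvalues of `B`, with equality when `P`
projects onto the corresponding eigenvectors. Indeed, in an eigenbasis of `B` one has
`tr(P B) = ∑ qᵢ λᵢ` where the `qᵢ` are diagonal entries of a projection, so `0 ≤ qᵢ ≤ 1` and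
`∑ qᵢ = k`, and such a weighting favours the largest `λᵢ` at best.

Take `P` to be the spectral projection of `Tr₁ σ` onto its top `k` eigenvectors. Moving `f_j ⊗ I`
cyclically under `Tr₁` and using `∑ f_jᴴ f_j = I` gives `Tr₁ σ = ∑_j Tr₁((f_j ⊗ I) σ (f_j ⊗ I)ᴴ)`,
so the top-`k` sum for `Tr₁ σ` is `∑_j re tr(P Bⱼ)`, and each term is bounded by the top-`k` sum
for `Bⱼ`.
-/

open Finset

theorem sum_mul_le_sum_of_threshold {ι : Type*} [Fintype ι] (s : Finset ι) {μ t : ι → ℝ}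
    (c : ℝ) (hs : ∀ i ∈ s, c ≤ μ i) (hsc : ∀ i ∉ s, μ i ≤ c)
    (ht0 : ∀ i, 0 ≤ t i) (ht1 : ∀ i, t i ≤ 1) (hsum : ∑ i, t i = #s) :
    ∑ i, t i * μ i ≤ ∑ i ∈ s, μ i := by
  classical
  calc ∑ i, t i * μ i ≤ ∑ i, ((if i ∈ s then μ i - c else 0) + c * t i) := by
        refine sum_le_sum fun i _ => ?_
        split_ifs with hi
        · nlinarith [hs i hi, ht1 i]
        · nlinarith [hsc i hi, ht0 i]
    _ = ∑ i ∈ s, μ i := by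
        rw [sum_add_distrib, ← sum_filter, filter_mem_eq_inter, univ_inter, sum_sub_distrib,
          ← mul_sum, hsum, sum_const, nsmul_eq_mul]
        ring

section TopIndices

variable {ι : Type*} [Fintype ι] {d : ℕ}

def topIndices (e : ι ≃ Fin d) (k : ℕ) : Finset ι := {i | (e i : ℕ) < k}

theorem sum_topIndices {M : Type*} [AddCommMonoid M] (e : ι ≃ Fin d) {k : ℕ} (hk : k ≤ d)
    (g : Fin d → M) : ∑ i ∈ topIndices e k, g (e i) = ∑ i : Fin k, g (Fin.castLE hk i) := by
  have : topIndices e k = (univ.map (Fin.castLEEmb hk)).map e.symm.toEmbedding := by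
    ext i
    simp only [topIndices, mem_filter, mem_univ, true_and, mem_map, Fin.castLEEmb_apply,
      Equiv.coe_toEmbedding, e.symm_apply_eq]
    exact ⟨fun h => ⟨e i, ⟨⟨e i, h⟩, rfl⟩, rfl⟩, by rintro ⟨-, ⟨j, rfl⟩, hj⟩; simp [← hj]⟩
  simp [this, sum_map]

theorem card_topIndices (e : ι ≃ Fin d) {k : ℕ} (hk : k ≤ d) : #(topIndices e k) = k := by
  simpa [sum_const] using sum_topIndices e hk (fun _ => (1 : ℕ))

theorem exists_threshold_topIndices {ν : Fin d → ℝ} (hν : Antitone ν) (e : ι ≃ Fin d) {k : ℕ}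
    (hk1 : 1 ≤ k) (hk : k ≤ d) :
    ∃ c, (∀ i ∈ topIndices e k, c ≤ ν (e i)) ∧ ∀ i ∉ topIndices e k, ν (e i) ≤ c := by
  refine ⟨ν ⟨k - 1, by omega⟩, fun i hi => hν ?_, fun i hi => hν ?_⟩ <;>
    simp only [topIndices, mem_filter, mem_univ, true_and] at hi <;>
    rw [Fin.le_def] <;> simp only <;> omega

end TopIndices

namespace Matrix

theorem trace_conjStarAlgAut {R n : Type*} [CommRing R] [StarRing R] [Fintype n] [DecidableEq n]
    (u : unitary (Matrix n n R)) (X : Matrix n n R) :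
    (Unitary.conjStarAlgAut R _ u X).trace = X.trace := by
  rw [Unitary.conjStarAlgAut_apply, trace_mul_cycle, Unitary.coe_star_mul_self, Matrix.one_mul]

namespace IsHermitian

variable {𝕜 n : Type*} [RCLike 𝕜] [Fintype n] [DecidableEq n] {A : Matrix n n 𝕜}
  (hA : A.IsHermitian)

include hA in
theorem trace_mul_eq_sum_diag_mul_eigenvalues_s9 (M : Matrix n n 𝕜) :
    (M * A).trace = ∑ i,
      Unitary.conjStarAlgAut 𝕜 _ (star hA.eigenvectorUnitary) M i i * hA.eigenvalues i := by
  rw [← trace_conjStarAlgAut (star hA.eigenvectorUnitary), map_mul,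
    hA.conjStarAlgAut_star_eigenvectorUnitary]
  simp [trace, mul_diagonal]

noncomputable def eigenprojection (s : Finset n) : Matrix n n 𝕜 :=
  Unitary.conjStarAlgAut 𝕜 _ hA.eigenvectorUnitary (diagonal fun i => if i ∈ s then 1 else 0)

theorem isStarProjection_eigenprojection (s : Finset n) :
    IsStarProjection (hA.eigenprojection s) := by
  refine IsStarProjection.map ⟨?_, ?_⟩ _
  · rw [IsIdempotentElem, diagonal_mul_diagonal]
    congr 1; ext i; split_ifs <;> simp
  · rw [IsSelfAdjoint, star_eq_conjTranspose, diagonal_conjTranspose]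
    congr 1; ext i; split_ifs <;> simp [*]

theorem trace_eigenprojection (s : Finset n) : (hA.eigenprojection s).trace = #s := by
  rw [eigenprojection, trace_conjStarAlgAut, trace_diagonal, sum_boole]
  simp

theorem trace_eigenprojection_mul (s : Finset n) :
    (hA.eigenprojection s * A).trace = ∑ i ∈ s, (hA.eigenvalues i : 𝕜) := by
  rw [hA.trace_mul_eq_sum_diag_mul_eigenvalues_s9, eigenprojection, ← Unitary.conjStarAlgAut_symm,
    StarAlgEquiv.symm_apply_apply]
  simp [diagonal_apply_eq, ite_mul, sum_ite_mem]

open scoped ComplexOrder MatrixOrder in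
include hA in
theorem re_trace_mul_le_sum_eigenvalues_s9 {P : Matrix n n 𝕜} (hP : IsStarProjection P)
    {s : Finset n} (hPs : P.trace = #s) (c : ℝ) (hs : ∀ i ∈ s, c ≤ hA.eigenvalues i)
    (hsc : ∀ i ∉ s, hA.eigenvalues i ≤ c) :
    RCLike.re (P * A).trace ≤ ∑ i ∈ s, hA.eigenvalues i := by
  set Q := Unitary.conjStarAlgAut 𝕜 _ (star hA.eigenvectorUnitary) P
  have hQ : IsStarProjection Q := hP.map _
  have hQ0 i : 0 ≤ RCLike.re (Q i i) :=
    (RCLike.nonneg_iff.mp (nonneg_iff_posSemidef.mp hQ.nonneg).diag_nonneg).1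
  have hQ1 i : RCLike.re (Q i i) ≤ 1 := by
    simpa using (RCLike.nonneg_iff.mp ((le_iff.mp hQ.le_one).diag_nonneg (i := i))).1
  have hQtr : ∑ i, RCLike.re (Q i i) = #s := by
    rw [← RCLike.natCast_re (K := 𝕜), ← hPs, ← trace_conjStarAlgAut (star hA.eigenvectorUnitary),
      trace, map_sum]
    rfl
  rw [hA.trace_mul_eq_sum_diag_mul_eigenvalues_s9, map_sum]
  simp_rw [RCLike.re_mul_ofReal]
  exact sum_mul_le_sum_of_threshold s c hs hsc hQ0 hQ1 hQtr

include hA in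
theorem re_trace_mul_le_sum_castLE {P : Matrix n n 𝕜} (hP : IsStarProjection P) {k d : ℕ}
    (hPk : P.trace = k) {ν : Fin d → ℝ} (hν : Antitone ν) (e : n ≃ Fin d)
    (he : ∀ i, ν (e i) = hA.eigenvalues i) (hk1 : 1 ≤ k) (hk : k ≤ d) :
    RCLike.re (P * A).trace ≤ ∑ i : Fin k, ν (Fin.castLE hk i) := by
  obtain ⟨c, hs, hsc⟩ := exists_threshold_topIndices hν e hk1 hk
  simp only [he] at hs hsc
  rw [← sum_topIndices e hk]
  simp only [he]
  exact hA.re_trace_mul_le_sum_eigenvalues_s9 hP (by rw [hPk, card_topIndices e hk]) c hs hsc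

end IsHermitian

section PartialTrace

variable {α β : Type*} [Fintype α]

theorem ptrace1_sum {ι : Type*} (s : Finset ι) (M : ι → Matrix (α × β) (α × β) ℂ) :
    ptrace1 (∑ j ∈ s, M j) = ∑ j ∈ s, ptrace1 (M j) := by
  ext i j
  simp only [ptrace1, of_apply, sum_apply]
  exact sum_comm

variable [Fintype β] [DecidableEq β]

theorem ptrace1_kronecker_one_mul_comm (g : Matrix α α ℂ) (M : Matrix (α × β) (α × β) ℂ) :
    ptrace1 ((g ⊗ₖ (1 : Matrix β β ℂ)) * M) = ptrace1 (M * (g ⊗ₖ 1)) := by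
  ext i j
  simp only [ptrace1, of_apply, mul_apply, Fintype.sum_prod_type, kroneckerMap_apply, one_apply,
    mul_ite, mul_zero, mul_one, ite_mul, zero_mul, sum_ite_eq, sum_ite_eq', mem_univ, if_true]
  rw [sum_comm]
  exact sum_congr rfl fun _ _ => sum_congr rfl fun _ _ => mul_comm _ _

theorem sum_ptrace1_kronecker_one_conj [DecidableEq α] {ι : Type*} [Fintype ι]
    (σ : Matrix (α × β) (α × β) ℂ) (f : ι → Matrix α α ℂ) (hf : ∑ j, (f j)ᴴ * f j = 1) :
    ∑ j, ptrace1 ((f j ⊗ₖ (1 : Matrix β β ℂ)) * σ * (f j ⊗ₖ 1)ᴴ) = ptrace1 σ := by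
  calc ∑ j, ptrace1 ((f j ⊗ₖ (1 : Matrix β β ℂ)) * σ * (f j ⊗ₖ 1)ᴴ)
      = ∑ j, ptrace1 (σ * (((f j)ᴴ * f j) ⊗ₖ (1 : Matrix β β ℂ))) := by
        refine sum_congr rfl fun j _ => ?_
        rw [Matrix.mul_assoc, ptrace1_kronecker_one_mul_comm, Matrix.mul_assoc,
          conjTranspose_kronecker, conjTranspose_one, ← mul_kronecker_mul, Matrix.one_mul]
    _ = ptrace1 (σ * ((∑ j, (f j)ᴴ * f j) ⊗ₖ (1 : Matrix β β ℂ))) := by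
        rw [← ptrace1_sum, ← Matrix.mul_sum]
        congr 2
        ext ⟨a, b⟩ ⟨c, d⟩
        simp [sum_apply, sum_mul]
    _ = ptrace1 σ := by rw [hf, one_kronecker_one, Matrix.mul_one]

end PartialTrace

end Matrix

theorem expected_spectrum_majorizes_other_general {α β : Type*}
    [Fintype α] [Fintype β] [DecidableEq α] [DecidableEq β] {m : ℕ}
    (σ : Matrix (α × β) (α × β) ℂ)
    (f : Fin m → Matrix α α ℂ)
    (hf : ∑ j : Fin m, (f j)ᴴ * f j = 1)
    (hherm : ∀ j, (ptrace1 ((f j ⊗ₖ (1 : Matrix β β ℂ)) * σ *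
      (f j ⊗ₖ (1 : Matrix β β ℂ))ᴴ)).IsHermitian)
    (hherm0 : (ptrace1 σ).IsHermitian)
    (μ : Fin m → Fin (Fintype.card β) → ℝ) (hμa : ∀ j, Antitone (μ j))
    (hμp : ∀ j, ∃ e : β ≃ Fin (Fintype.card β), ∀ i, μ j (e i) = (hherm j).eigenvalues i)
    (ν : Fin (Fintype.card β) → ℝ)
    (hνp : ∃ e : β ≃ Fin (Fintype.card β), ∀ i, ν (e i) = hherm0.eigenvalues i) :
    ∀ (k : ℕ), 1 ≤ k → ∀ (hk : k ≤ Fintype.card β),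
      ∑ i : Fin k, ν (Fin.castLE hk i) ≤
        ∑ j : Fin m, ∑ i : Fin k, μ j (Fin.castLE hk i) := by
  intro k hk1 hk
  obtain ⟨e, he⟩ := hνp
  set P := hherm0.eigenprojection (topIndices e k)
  have hPk : P.trace = k := by rw [hherm0.trace_eigenprojection, card_topIndices e hk]
  calc ∑ i : Fin k, ν (Fin.castLE hk i) = RCLike.re (P * ptrace1 σ).trace := by
        rw [hherm0.trace_eigenprojection_mul, ← sum_topIndices e hk, map_sum]
        simp [he]
    _ = ∑ j, RCLike.re (P * ptrace1 ((f j ⊗ₖ (1 : Matrix β β ℂ)) * σ * (f j ⊗ₖ 1)ᴴ)).trace := by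
        rw [← sum_ptrace1_kronecker_one_conj σ f hf, Matrix.mul_sum, trace_sum, map_sum]
    _ ≤ ∑ j : Fin m, ∑ i : Fin k, μ j (Fin.castLE hk i) := sum_le_sum fun j _ => by
        obtain ⟨e', he'⟩ := hμp j
        exact (hherm j).re_trace_mul_le_sum_castLE
          (hherm0.isStarProjection_eigenprojection _) hPk (hμa j) e' he' hk1 hk

/-- The expected spectrum of Bob's local state after Alice's generalized measurement
majorizes the spectrum of Bob's current local state. -/
theorem expected_spectrum_majorizes_other {α β : Type*}
    [Fintype α] [Fintype β] [DecidableEq α] [DecidableEq β] {m : ℕ}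
    (σ : Matrix (α × β) (α × β) ℂ) (hσ : σ.PosSemidef) (hσtr : σ.trace = 1)
    (f : Fin m → Matrix α α ℂ)
    (hf : ∑ j : Fin m, (f j)ᴴ * f j = 1)
    (hherm : ∀ j, (ptrace1 ((f j ⊗ₖ (1 : Matrix β β ℂ)) * σ *
      (f j ⊗ₖ (1 : Matrix β β ℂ))ᴴ)).IsHermitian)
    (hherm0 : (ptrace1 σ).IsHermitian)
    (μ : Fin m → Fin (Fintype.card β) → ℝ) (hμa : ∀ j, Antitone (μ j))
    (hμp : ∀ j, ∃ e : β ≃ Fin (Fintype.card β), ∀ i, μ j (e i) = (hherm j).eigenvalues i)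
    (ν : Fin (Fintype.card β) → ℝ) (hνa : Antitone ν)
    (hνp : ∃ e : β ≃ Fin (Fintype.card β), ∀ i, ν (e i) = hherm0.eigenvalues i) :
    ∀ (k : ℕ), 1 ≤ k → ∀ (hk : k ≤ Fintype.card β),
      ∑ i : Fin k, ν (Fin.castLE hk i) ≤
        ∑ j : Fin m, ∑ i : Fin k, μ j (Fin.castLE hk i) :=
  expected_spectrum_majorizes_other_general σ f hf hherm hherm0 μ hμa hμp ν hνp
end

section
/- Let λ₂⁰, λ₃⁰ be reals with 1 ≥ λ₂⁰ ≥ λ₃⁰ ≥ 1/2. There exists a vector x : (Fin 2 × Fin 2 × Fin 2) → ℂ such that ρ₁^x = diag(1, 0), ρ₂^x = diag(λ₂⁰, 1 − λ₂⁰) and ρ₃^x = diag(λ₃⁰, 1 − λ₃⁰) if and only if λ₂⁰ = λ₃⁰. -/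
open Matrix

/-- Local state of qubit 1 of a three-qubit pure state. -/
noncomputable def rho1 (x : Fin 2 × Fin 2 × Fin 2 → ℂ) : Matrix (Fin 2) (Fin 2) ℂ :=
  Matrix.of fun a b => ∑ l : Fin 2, ∑ m : Fin 2, x (a, l, m) * star (x (b, l, m))

/-- Local state of qubit 2 of a three-qubit pure state. -/
noncomputable def rho2 (x : Fin 2 × Fin 2 × Fin 2 → ℂ) : Matrix (Fin 2) (Fin 2) ℂ :=
  Matrix.of fun a b => ∑ k : Fin 2, ∑ m : Fin 2, x (k, a, m) * star (x (k, b, m))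

/-- Local state of qubit 3 of a three-qubit pure state. -/
noncomputable def rho3 (x : Fin 2 × Fin 2 × Fin 2 → ℂ) : Matrix (Fin 2) (Fin 2) ℂ :=
  Matrix.of fun a b => ∑ k : Fin 2, ∑ l : Fin 2, x (k, l, a) * star (x (k, l, b))

/-- When the first qubit is in a pure local state (`λ₁⁰ = 1`), a three-qubit vector with
the prescribed diagonal local states exists iff `λ₂⁰ = λ₃⁰`. -/
theorem three_qubit_product_case (l2 l3 : ℝ)
    (hl2 : l2 ≤ 1) (h23 : l3 ≤ l2) (hl3 : 1 / 2 ≤ l3) :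
    (∃ x : Fin 2 × Fin 2 × Fin 2 → ℂ,
      rho1 x = !![(1 : ℂ), 0; 0, 0] ∧
      rho2 x = !![(l2 : ℂ), 0; 0, 1 - (l2 : ℂ)] ∧
      rho3 x = !![(l3 : ℂ), 0; 0, 1 - (l3 : ℂ)]) ↔ l2 = l3 := by
  constructor
  · rintro ⟨x, h1, h2, h3⟩
    -- the second row of x vanishes
    have key : ∀ l m : Fin 2, x (1, l, m) = 0 := by
      have e := congrFun (congrFun h1 1) 1
      simp only [rho1, Matrix.of_apply, Fin.sum_univ_two, Complex.star_def,
        Complex.mul_conj] at e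
      norm_num at e
      have e' : Complex.normSq (x (1,0,0)) + Complex.normSq (x (1,0,1)) +
          (Complex.normSq (x (1,1,0)) + Complex.normSq (x (1,1,1))) = 0 := by
        exact_mod_cast e
      have nn := fun l m => Complex.normSq_nonneg (x (1, l, m))
      have z : ∀ l m : Fin 2, Complex.normSq (x (1, l, m)) = 0 := by
        intro l m
        fin_cases l <;> fin_cases m <;> simp only [Fin.zero_eta, Fin.mk_one, Fin.isValue] <;>
          linarith [nn 0 0, nn 0 1, nn 1 0, nn 1 1]
      intro l m
      exact Complex.normSq_eq_zero.mp (z l m)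
    set A := x (0,0,0); set B := x (0,0,1); set C := x (0,1,0); set D := x (0,1,1)
    have e2d := congrFun (congrFun h2 0) 0
    have e2d' := congrFun (congrFun h2 1) 1
    have e3d := congrFun (congrFun h3 0) 0
    have e2o := congrFun (congrFun h2 0) 1
    have e3o := congrFun (congrFun h3 0) 1
    simp only [rho2, rho3, Matrix.of_apply, Fin.sum_univ_two, key, Complex.star_def,
      Complex.mul_conj, zero_mul, mul_zero, map_zero, add_zero, zero_add] at e2d e2d' e3d e2o e3o
    norm_num at e2d e2d' e3d e2o e3o
    set nA := Complex.normSq A with hnA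
    set nB := Complex.normSq B with hnB
    set nC := Complex.normSq C with hnC
    set nD := Complex.normSq D with hnD
    have E1 : nA + nB = l2 := by exact_mod_cast e2d
    have E2 : nC + nD = 1 - l2 := by exact_mod_cast e2d'
    have E3 : nA + nC = l3 := by exact_mod_cast e3d
    have h5 : A * (starRingEnd ℂ) C = -(B * (starRingEnd ℂ) D) := by linear_combination e2o
    have h6 : A * (starRingEnd ℂ) B = -(C * (starRingEnd ℂ) D) := by linear_combination e3o
    have E5 : nA * nC = nB * nD := by
      have := congrArg Complex.normSq h5
      simpa [_root_.map_mul, Complex.normSq_conj, Complex.normSq_neg, hnA, hnB, hnC, hnD] using this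
    have E6 : nA * nB = nC * nD := by
      have := congrArg Complex.normSq h6
      simpa [_root_.map_mul, Complex.normSq_conj, Complex.normSq_neg, hnA, hnB, hnC, hnD] using this
    have P1 : nA * (nC ^ 2 - nB ^ 2) = 0 := by linear_combination nC * E5 - nB * E6
    have P2 : nD * (nC ^ 2 - nB ^ 2) = 0 := by linear_combination nB * E5 - nC * E6
    have hCB : nC ≤ nB := by linarith
    rcases eq_or_lt_of_le hCB with h | h
    · linarith
    · have hBpos : 0 < nB := lt_of_le_of_lt (Complex.normSq_nonneg C) h
      have hsq : nC ^ 2 - nB ^ 2 < 0 := by nlinarith [Complex.normSq_nonneg C]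
      have hA0 : nA = 0 := by
        rcases mul_eq_zero.mp P1 with h' | h'
        · exact h'
        · exact absurd h' (ne_of_lt hsq)
      have hD0 : nD = 0 := by
        rcases mul_eq_zero.mp P2 with h' | h'
        · exact h'
        · exact absurd h' (ne_of_lt hsq)
      linarith
  · rintro rfl
    have h0 : (0:ℝ) ≤ l2 := by linarith
    have h1' : (0:ℝ) ≤ 1 - l2 := by linarith
    refine ⟨fun p => (![![![(Real.sqrt l2 : ℂ),0],![0,(Real.sqrt (1-l2) : ℂ)]],
      ![![0,0],![0,0]]] : Fin 2 → Fin 2 → Fin 2 → ℂ) p.1 p.2.1 p.2.2, ?_, ?_, ?_⟩ <;>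
      · ext a b
        fin_cases a <;> fin_cases b <;>
          simp [rho1, rho2, rho3, Fin.sum_univ_two, ← Complex.ofReal_mul,
            Real.mul_self_sqrt, h0, h1']
end

section
/- Let λ₁, λ₂, λ₃ be reals with 1 ≥ λ₁ ≥ λ₂ ≥ λ₃ ≥ 1/2 and λ₁ + λ₂ − λ₃ ≤ 1, and let θ₀₀₀, θ₀₁₁, θ₁₀₁, θ₁₁₀ be arbitrary reals. Define y : (Fin 2 × Fin 2 × Fin 2) → ℂ by y_{klm} = 0 whenever k+l+m is odd, and y₀₀₀ = e^{iθ₀₀₀}·√(2(λ₁ + λ₂ + λ₃ − 1))/2, y₀₁₁ = e^{iθ₀₁₁}·√(2(λ₁ − λ₂ − λ₃ + 1))/2, y₁₀₁ = e^{iθ₁₀₁}·√(2(−λ₁ + λ₂ − λ₃ + 1))/2, y₁₁₀ = e^{iθ₁₁₀}·√(2(−λ₁ − λ₂ + λ₃ + 1))/2. Then y is a unit vector and ρ_i^y = diag(λ_i, 1 − λ_i) for each i = 1, 2, 3. -/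
open Matrix

lemma normSq_phase_sqrt (t c : ℝ) (hc : 0 ≤ c) :
    Complex.normSq (Complex.exp ((t : ℂ) * Complex.I) * ((Real.sqrt (2 * c) / 2 : ℝ) : ℂ))
      = c / 2 := by
  rw [Complex.normSq_mul, Complex.normSq_ofReal]
  have h1 : Complex.normSq (Complex.exp ((t : ℂ) * Complex.I)) = 1 := by
    rw [Complex.normSq_eq_norm_sq, Complex.norm_exp_ofReal_mul_I]; norm_num
  have h2 : Real.sqrt (2 * c) * Real.sqrt (2 * c) = 2 * c :=
    Real.mul_self_sqrt (by linarith)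
  rw [h1, one_mul, div_mul_div_comm, h2]
  ring

lemma mul_star_phase_sqrt (t c : ℝ) (hc : 0 ≤ c) :
    (Complex.exp ((t : ℂ) * Complex.I) * ((Real.sqrt (2 * c) / 2 : ℝ) : ℂ)) *
      star (Complex.exp ((t : ℂ) * Complex.I) * ((Real.sqrt (2 * c) / 2 : ℝ) : ℂ))
      = ((c / 2 : ℝ) : ℂ) := by
  rw [show (star (Complex.exp ((t : ℂ) * Complex.I) * ((Real.sqrt (2 * c) / 2 : ℝ) : ℂ)) : ℂ) = (starRingEnd ℂ) _ from rfl, Complex.mul_conj, normSq_phase_sqrt t c hc]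

/-- The first family of solutions: if `λ₁ + λ₂ - λ₃ ≤ 1`, the vector `y` supported on
even indices with the indicated moduli and arbitrary phases is a unit vector whose local
states are `diag(λᵢ, 1 - λᵢ)`. -/
theorem three_qubit_solution_even (l1 l2 l3 : ℝ)
    (hl1 : l1 ≤ 1) (h12 : l2 ≤ l1) (h23 : l3 ≤ l2) (hl3 : 1 / 2 ≤ l3)
    (hcond : l1 + l2 - l3 ≤ 1)
    (t000 t011 t101 t110 : ℝ)
    (y : Fin 2 × Fin 2 × Fin 2 → ℂ)
    (hy001 : y (0, 0, 1) = 0) (hy010 : y (0, 1, 0) = 0)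
    (hy100 : y (1, 0, 0) = 0) (hy111 : y (1, 1, 1) = 0)
    (hy000 : y (0, 0, 0) =
      Complex.exp ((t000 : ℂ) * Complex.I) * ((Real.sqrt (2 * (l1 + l2 + l3 - 1)) / 2 : ℝ) : ℂ))
    (hy011 : y (0, 1, 1) =
      Complex.exp ((t011 : ℂ) * Complex.I) * ((Real.sqrt (2 * (l1 - l2 - l3 + 1)) / 2 : ℝ) : ℂ))
    (hy101 : y (1, 0, 1) =
      Complex.exp ((t101 : ℂ) * Complex.I) * ((Real.sqrt (2 * (-l1 + l2 - l3 + 1)) / 2 : ℝ) : ℂ))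
    (hy110 : y (1, 1, 0) =
      Complex.exp ((t110 : ℂ) * Complex.I) * ((Real.sqrt (2 * (-l1 - l2 + l3 + 1)) / 2 : ℝ) : ℂ)) :
    (∑ v : Fin 2 × Fin 2 × Fin 2, Complex.normSq (y v) = 1) ∧
    rho1 y = !![(l1 : ℂ), 0; 0, 1 - (l1 : ℂ)] ∧
    rho2 y = !![(l2 : ℂ), 0; 0, 1 - (l2 : ℂ)] ∧
    rho3 y = !![(l3 : ℂ), 0; 0, 1 - (l3 : ℂ)] := by
  have hc000 : (0:ℝ) ≤ l1 + l2 + l3 - 1 := by linarith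
  have hc011 : (0:ℝ) ≤ l1 - l2 - l3 + 1 := by linarith
  have hc101 : (0:ℝ) ≤ -l1 + l2 - l3 + 1 := by linarith
  have hc110 : (0:ℝ) ≤ -l1 - l2 + l3 + 1 := by linarith
  have n000 := normSq_phase_sqrt t000 _ hc000
  have n011 := normSq_phase_sqrt t011 _ hc011
  have n101 := normSq_phase_sqrt t101 _ hc101
  have n110 := normSq_phase_sqrt t110 _ hc110
  have m000 := mul_star_phase_sqrt t000 _ hc000
  have m011 := mul_star_phase_sqrt t011 _ hc011
  have m101 := mul_star_phase_sqrt t101 _ hc101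
  have m110 := mul_star_phase_sqrt t110 _ hc110
  refine ⟨?_, ?_, ?_, ?_⟩
  · rw [Fintype.sum_prod_type]
    simp only [Fintype.sum_prod_type, Fin.sum_univ_two, hy000, hy001, hy010, hy011, hy100,
      hy101, hy110, hy111, n000, n011, n101, n110, map_zero]
    ring
  all_goals {
    ext a b
    fin_cases a <;> fin_cases b <;>
      simp only [rho1, rho2, rho3, Matrix.of_apply, Fin.sum_univ_two, hy000, hy001, hy010,
        hy011, hy100, hy101, hy110, hy111, m000, m011, m101, m110, star_zero, mul_zero,
        zero_mul, add_zero, zero_add, Matrix.cons_val', Matrix.cons_val_zero,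
        Matrix.cons_val_one, Matrix.head_cons, Matrix.head_fin_const, Matrix.empty_val',
        Matrix.cons_val_fin_one, Fin.isValue, Fin.zero_eta, Fin.mk_one] <;>
      push_cast <;> ring
  }
end

section
/- Let λ₁, λ₂, λ₃ be reals with 1 ≥ λ₁ ≥ λ₂ ≥ λ₃ ≥ 1/2 and λ₁ + λ₂ + λ₃ ≤ 2, and let θ₀₀₁, θ₀₁₀, θ₁₀₀, θ₁₁₁ be arbitrary reals. Define z : (Fin 2 × Fin 2 × Fin 2) → ℂ by z_{klm} = 0 whenever k+l+m is even, and z₀₀₁ = e^{iθ₀₀₁}·√(2(λ₁ + λ₂ − λ₃))/2, z₀₁₀ = e^{iθ₀₁₀}·√(2(λ₁ − λ₂ + λ₃))/2, z₁₀₀ = e^{iθ₁₀₀}·√(2(−λ₁ + λ₂ + λ₃))/2, z₁₁₁ = e^{iθ₁₁₁}·√(2(−λ₁ − λ₂ − λ₃ + 2))/2. Then z is a unit vector and ρ_i^z = diag(λ_i, 1 − λ_i) for each i = 1, 2, 3. -/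
open Matrix

lemma key_normSq (t x : ℝ) (hx : 0 ≤ x) :
    Complex.normSq (Complex.exp ((t : ℂ) * Complex.I) * ((Real.sqrt x / 2 : ℝ) : ℂ)) = x / 4 := by
  rw [Complex.normSq_mul, Complex.normSq_eq_norm_sq, Complex.norm_exp_ofReal_mul_I,
    Complex.normSq_ofReal]
  rw [div_mul_div_comm, Real.mul_self_sqrt hx]
  norm_num

/-- The second family of solutions: if `λ₁ + λ₂ + λ₃ ≤ 2`, the vector `z` supported on
odd indices with the indicated moduli and arbitrary phases is a unit vector whose local
states are `diag(λᵢ, 1 - λᵢ)`. -/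
theorem three_qubit_solution_odd (l1 l2 l3 : ℝ)
    (hl1 : l1 ≤ 1) (h12 : l2 ≤ l1) (h23 : l3 ≤ l2) (hl3 : 1 / 2 ≤ l3)
    (hcond : l1 + l2 + l3 ≤ 2)
    (t001 t010 t100 t111 : ℝ)
    (z : Fin 2 × Fin 2 × Fin 2 → ℂ)
    (hz000 : z (0, 0, 0) = 0) (hz011 : z (0, 1, 1) = 0)
    (hz101 : z (1, 0, 1) = 0) (hz110 : z (1, 1, 0) = 0)
    (hz001 : z (0, 0, 1) =
      Complex.exp ((t001 : ℂ) * Complex.I) * ((Real.sqrt (2 * (l1 + l2 - l3)) / 2 : ℝ) : ℂ))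
    (hz010 : z (0, 1, 0) =
      Complex.exp ((t010 : ℂ) * Complex.I) * ((Real.sqrt (2 * (l1 - l2 + l3)) / 2 : ℝ) : ℂ))
    (hz100 : z (1, 0, 0) =
      Complex.exp ((t100 : ℂ) * Complex.I) * ((Real.sqrt (2 * (-l1 + l2 + l3)) / 2 : ℝ) : ℂ))
    (hz111 : z (1, 1, 1) =
      Complex.exp ((t111 : ℂ) * Complex.I) * ((Real.sqrt (2 * (-l1 - l2 - l3 + 2)) / 2 : ℝ) : ℂ)) :
    (∑ v : Fin 2 × Fin 2 × Fin 2, Complex.normSq (z v) = 1) ∧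
    rho1 z = !![(l1 : ℂ), 0; 0, 1 - (l1 : ℂ)] ∧
    rho2 z = !![(l2 : ℂ), 0; 0, 1 - (l2 : ℂ)] ∧
    rho3 z = !![(l3 : ℂ), 0; 0, 1 - (l3 : ℂ)] := by
  have hq1 : (0:ℝ) ≤ 2 * (l1 + l2 - l3) := by linarith
  have hq2 : (0:ℝ) ≤ 2 * (l1 - l2 + l3) := by linarith
  have hq3 : (0:ℝ) ≤ 2 * (-l1 + l2 + l3) := by linarith
  have hq4 : (0:ℝ) ≤ 2 * (-l1 - l2 - l3 + 2) := by linarith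
  have n001 : Complex.normSq (z (0, 0, 1)) = (l1 + l2 - l3) / 2 := by
    rw [hz001, key_normSq _ _ hq1]; ring
  have n010 : Complex.normSq (z (0, 1, 0)) = (l1 - l2 + l3) / 2 := by
    rw [hz010, key_normSq _ _ hq2]; ring
  have n100 : Complex.normSq (z (1, 0, 0)) = (-l1 + l2 + l3) / 2 := by
    rw [hz100, key_normSq _ _ hq3]; ring
  have n111 : Complex.normSq (z (1, 1, 1)) = (-l1 - l2 - l3 + 2) / 2 := by
    rw [hz111, key_normSq _ _ hq4]; ring
  have m001 : z (0, 0, 1) * star (z (0, 0, 1)) = (((l1 + l2 - l3) / 2 : ℝ) : ℂ) := by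
    rw [Complex.star_def, Complex.mul_conj, n001]
  have m010 : z (0, 1, 0) * star (z (0, 1, 0)) = (((l1 - l2 + l3) / 2 : ℝ) : ℂ) := by
    rw [Complex.star_def, Complex.mul_conj, n010]
  have m100 : z (1, 0, 0) * star (z (1, 0, 0)) = (((-l1 + l2 + l3) / 2 : ℝ) : ℂ) := by
    rw [Complex.star_def, Complex.mul_conj, n100]
  have m111 : z (1, 1, 1) * star (z (1, 1, 1)) = (((-l1 - l2 - l3 + 2) / 2 : ℝ) : ℂ) := by
    rw [Complex.star_def, Complex.mul_conj, n111]
  refine ⟨?_, ?_, ?_, ?_⟩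
  · rw [Fintype.sum_prod_type]
    simp only [Fintype.sum_prod_type, Fin.sum_univ_two, hz000, hz011, hz101, hz110,
      n001, n010, n100, n111, map_zero]
    ring
  · ext i j
    fin_cases i <;> fin_cases j <;>
      simp only [rho1, Matrix.of_apply, Fin.sum_univ_two, hz000, hz011, hz101, hz110,
        m001, m010, m100, m111, star_zero, mul_zero, zero_mul, add_zero, zero_add,
        Matrix.cons_val', Matrix.cons_val_zero, Matrix.cons_val_one, Matrix.head_cons,
        Matrix.empty_val', Matrix.cons_val_fin_one, Matrix.head_fin_const, Fin.mk_zero, Fin.mk_one, Fin.isValue] <;>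
      push_cast <;> ring
  · ext i j
    fin_cases i <;> fin_cases j <;>
      simp only [rho2, Matrix.of_apply, Fin.sum_univ_two, hz000, hz011, hz101, hz110,
        m001, m010, m100, m111, star_zero, mul_zero, zero_mul, add_zero, zero_add,
        Matrix.cons_val', Matrix.cons_val_zero, Matrix.cons_val_one, Matrix.head_cons,
        Matrix.empty_val', Matrix.cons_val_fin_one, Matrix.head_fin_const, Fin.mk_zero, Fin.mk_one, Fin.isValue] <;>
      push_cast <;> ring
  · ext i j
    fin_cases i <;> fin_cases j <;>
      simp only [rho3, Matrix.of_apply, Fin.sum_univ_two, hz000, hz011, hz101, hz110,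
        m001, m010, m100, m111, star_zero, mul_zero, zero_mul, add_zero, zero_add,
        Matrix.cons_val', Matrix.cons_val_zero, Matrix.cons_val_one, Matrix.head_cons,
        Matrix.empty_val', Matrix.cons_val_fin_one, Matrix.head_fin_const, Fin.mk_zero, Fin.mk_one, Fin.isValue] <;>
      push_cast <;> ring
end

section
/- Let α and β be finite index types and let σ, τ : Matrix (α × β) (α × β) ℂ be density matrices such that: (1) Tr₂(τ) = Tr₂(σ), Tr₁(τ) = Tr₁(σ), both Tr₂(σ) and Tr₁(σ) are diagonal matrices, and in each of these two diagonal matrices the diagonal entries are real and pairwise distinct (no eigenvalue is degenerate); (2) there exist unitary matrices U : Matrix α α ℂ and V : Matrix β β ℂ with τ = (U ⊗ V) * σ * (U ⊗ V)ᴴ. Then the entries of σ and τ have equal moduli: |τ (i,k) (j,l)| = |σ (i,k) (j,l)| for all i, j : α and k, l : β. -/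
/-!
Conjugation by `U ⊗ V` acts on the partial traces as `Tr₂ ↦ U Tr₂ Uᴴ` and `Tr₁ ↦ V Tr₁ Vᴴ`: the
unitary on the factor that is traced out cancels by cyclicity of the trace. Equal partial traces
therefore make `U` commute with the diagonal matrix `Tr₂ σ`, whose entries are distinct, so `U` is
diagonal, and likewise `V`. Then `U ⊗ V` is a diagonal matrix of phases, and conjugating by it
multiplies each entry of `σ` by a number of modulus one.
-/

open Matrix Kronecker ComplexOrder

/-- Partial trace over the second tensor factor. -/
noncomputable def ptrace2 {α β : Type*} [Fintype β]
    (M : Matrix (α × β) (α × β) ℂ) : Matrix α α ℂ :=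
  Matrix.of fun i j => ∑ k : β, M (i, k) (j, k)

section PartialTrace

variable {α β : Type*} [Fintype α] [Fintype β]

lemma ptrace2_kronecker_one_mul [DecidableEq β] (A : Matrix α α ℂ)
    (M : Matrix (α × β) (α × β) ℂ) : ptrace2 ((A ⊗ₖ 1) * M) = A * ptrace2 M := by
  ext i j
  simpa [ptrace2, mul_apply, Fintype.sum_prod_type, one_apply, Finset.mul_sum]
    using Finset.sum_comm

lemma ptrace2_mul_kronecker_one [DecidableEq β] (M : Matrix (α × β) (α × β) ℂ)
    (B : Matrix α α ℂ) : ptrace2 (M * (B ⊗ₖ 1)) = ptrace2 M * B := by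
  ext i j
  simpa [ptrace2, mul_apply, Fintype.sum_prod_type, one_apply, Finset.sum_mul]
    using Finset.sum_comm

lemma ptrace2_one_kronecker_mul_comm [DecidableEq α] (V : Matrix β β ℂ)
    (M : Matrix (α × β) (α × β) ℂ) : ptrace2 ((1 ⊗ₖ V) * M) = ptrace2 (M * (1 ⊗ₖ V)) := by
  ext i j
  simp only [ptrace2, of_apply, mul_apply, kroneckerMap_apply, one_apply, ite_mul, one_mul,
    zero_mul, mul_ite, mul_zero, Fintype.sum_prod_type, Finset.sum_ite_eq, Finset.sum_ite_eq',
    Finset.sum_ite_irrel, Finset.sum_const_zero, Finset.mem_univ, if_true]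
  rw [Finset.sum_comm]
  simp_rw [mul_comm]

lemma ptrace2_kronecker_conj [DecidableEq α] [DecidableEq β] (A B : Matrix α α ℂ)
    {V : Matrix β β ℂ} (hV : Vᴴ * V = 1) (M : Matrix (α × β) (α × β) ℂ) :
    ptrace2 ((A ⊗ₖ V) * M * (B ⊗ₖ V)ᴴ) = A * ptrace2 M * Bᴴ := by
  have hAV : A ⊗ₖ V = (A ⊗ₖ 1) * (1 ⊗ₖ V) := by rw [← mul_kronecker_mul, mul_one, one_mul]
  have hBV : (B ⊗ₖ V)ᴴ = (1 ⊗ₖ Vᴴ) * (Bᴴ ⊗ₖ 1) := by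
    rw [conjTranspose_kronecker, ← mul_kronecker_mul, mul_one, one_mul]
  calc ptrace2 ((A ⊗ₖ V) * M * (B ⊗ₖ V)ᴴ)
      = ptrace2 ((A ⊗ₖ 1) * ((1 ⊗ₖ V) * (M * (1 ⊗ₖ Vᴴ))) * (Bᴴ ⊗ₖ 1)) := by
        rw [hAV, hBV]
        simp only [Matrix.mul_assoc]
    _ = A * ptrace2 (M * ((1 ⊗ₖ Vᴴ) * (1 ⊗ₖ V))) * Bᴴ := by
        rw [ptrace2_mul_kronecker_one, ptrace2_kronecker_one_mul, ptrace2_one_kronecker_mul_comm]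
        simp only [Matrix.mul_assoc]
    _ = A * ptrace2 M * Bᴴ := by
        rw [← mul_kronecker_mul, one_mul, hV, one_kronecker_one, Matrix.mul_one]

omit [Fintype β] in
lemma ptrace1_eq_ptrace2_reindex (M : Matrix (α × β) (α × β) ℂ) :
    ptrace1 M = ptrace2 (reindex (Equiv.prodComm α β) (Equiv.prodComm α β) M) :=
  rfl

omit [Fintype α] [Fintype β] in
lemma reindex_prodComm_kronecker {γ δ : Type*} (A : Matrix α γ ℂ) (B : Matrix β δ ℂ) :
    reindex (Equiv.prodComm α β) (Equiv.prodComm γ δ) (A ⊗ₖ B) = B ⊗ₖ A := by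
  ext ⟨k, i⟩ ⟨l, j⟩
  exact mul_comm _ _

lemma ptrace1_kronecker_conj [DecidableEq α] [DecidableEq β] {U : Matrix α α ℂ}
    (hU : Uᴴ * U = 1) (A B : Matrix β β ℂ) (M : Matrix (α × β) (α × β) ℂ) :
    ptrace1 ((U ⊗ₖ A) * M * (U ⊗ₖ B)ᴴ) = A * ptrace1 M * Bᴴ := by
  rw [ptrace1_eq_ptrace2_reindex, ptrace1_eq_ptrace2_reindex, ← ptrace2_kronecker_conj A B hU,
    ← reindex_prodComm_kronecker U A, ← reindex_prodComm_kronecker U B]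
  simp only [reindex_apply]
  rw [← submatrix_mul_equiv _ _ _ (Equiv.prodComm α β).symm,
    ← submatrix_mul_equiv _ _ _ (Equiv.prodComm α β).symm, conjTranspose_submatrix]

end PartialTrace

lemma commute_of_mul_mul_eq_of_mul_eq_one {M : Type*} [Monoid M] {a b c : M} (hca : c * a = 1)
    (h : a * b * c = b) : Commute a b :=
  calc a * b = a * b * (c * a) := by rw [hca, mul_one]
    _ = b * a := by rw [← mul_assoc, h]

namespace Matrix

variable {n R 𝕜 : Type*} [Fintype n] [DecidableEq n]

lemma isDiag_of_commute_diagonal [CommRing R] [NoZeroDivisors R] {A : Matrix n n R} {d : n → R}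
    (hd : Function.Injective d) (h : Commute A (diagonal d)) : A.IsDiag := by
  intro i j hij
  have hentry := congrFun (congrFun h.eq i) j
  rw [mul_diagonal, diagonal_mul] at hentry
  have hzero : A i j * (d j - d i) = 0 := by rw [mul_sub, hentry, mul_comm, sub_self]
  exact (mul_eq_zero.mp hzero).resolve_right (sub_ne_zero.mpr (hd.ne (Ne.symm hij)))

lemma IsDiag.isDiag_of_unitary_conj_eq [CommRing R] [StarRing R] [NoZeroDivisors R]
    {D U : Matrix n n R} (hD : D.IsDiag) (hnd : ∀ i j, i ≠ j → D i i ≠ D j j)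
    (hU : Uᴴ * U = 1) (h : U * D * Uᴴ = D) : U.IsDiag := by
  rw [← hD.diagonal_diag] at h
  exact isDiag_of_commute_diagonal (fun i j hij => by_contra fun hne => hnd i j hne hij)
    (commute_of_mul_mul_eq_of_mul_eq_one hU h)

lemma norm_diagonal_eq_one_of_conjTranspose_mul_self [RCLike 𝕜] {d : n → 𝕜}
    (h : (diagonal d)ᴴ * diagonal d = 1) (i : n) : ‖d i‖ = 1 := by
  have hi := congrFun (congrFun h i) i
  rw [diagonal_conjTranspose, diagonal_mul_diagonal, diagonal_apply_eq, one_apply_eq,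
    Pi.star_apply, RCLike.star_def, RCLike.conj_mul] at hi
  exact (pow_eq_one_iff_of_nonneg (norm_nonneg _) two_ne_zero).mp (by exact_mod_cast hi)

lemma IsDiag.norm_apply_self_eq_one [RCLike 𝕜] {U : Matrix n n 𝕜} (hdiag : U.IsDiag)
    (hU : Uᴴ * U = 1) (i : n) : ‖U i i‖ = 1 := by
  rw [← hdiag.diagonal_diag] at hU
  exact norm_diagonal_eq_one_of_conjTranspose_mul_self hU i

lemma norm_diagonal_mul_mul_conjTranspose_apply [RCLike 𝕜] {w : n → 𝕜} (hw : ∀ p, ‖w p‖ = 1)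
    (M : Matrix n n 𝕜) (p q : n) : ‖(diagonal w * M * (diagonal w)ᴴ) p q‖ = ‖M p q‖ := by
  simp [diagonal_conjTranspose, mul_diagonal, diagonal_mul, hw]

end Matrix

theorem local_unitary_equiv_entry_moduli_general {α β : Type*}
    [Fintype α] [Fintype β] [DecidableEq α] [DecidableEq β]
    (σ τ : Matrix (α × β) (α × β) ℂ)
    (heq2 : ptrace2 τ = ptrace2 σ) (heq1 : ptrace1 τ = ptrace1 σ)
    (hdiag2 : (ptrace2 σ).IsDiag) (hdiag1 : (ptrace1 σ).IsDiag)
    (hnd2 : ∀ i j, i ≠ j → (ptrace2 σ) i i ≠ (ptrace2 σ) j j)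
    (hnd1 : ∀ k l, k ≠ l → (ptrace1 σ) k k ≠ (ptrace1 σ) l l)
    (U : Matrix α α ℂ) (V : Matrix β β ℂ)
    (hU : Uᴴ * U = 1) (hV : Vᴴ * V = 1)
    (hτσ : τ = (U ⊗ₖ V) * σ * (U ⊗ₖ V)ᴴ) :
    ∀ (i j : α) (k l : β),
      ‖τ (i, k) (j, l)‖ = ‖σ (i, k) (j, l)‖ := by
  have hUdiag : U.IsDiag := hdiag2.isDiag_of_unitary_conj_eq hnd2 hU <| by
    rw [← ptrace2_kronecker_conj U U hV, ← hτσ, heq2]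
  have hVdiag : V.IsDiag := hdiag1.isDiag_of_unitary_conj_eq hnd1 hV <| by
    rw [← ptrace1_kronecker_conj hU V V, ← hτσ, heq1]
  have hUV : U ⊗ₖ V = diagonal fun p => U p.1 p.1 * V p.2 p.2 := by
    conv_lhs => rw [← hUdiag.diagonal_diag, ← hVdiag.diagonal_diag]
    exact diagonal_kronecker_diagonal _ _
  intro i j k l
  rw [hτσ, hUV]
  refine norm_diagonal_mul_mul_conjTranspose_apply (fun p => ?_) σ (i, k) (j, l)
  rw [norm_mul, hUdiag.norm_apply_self_eq_one hU, hVdiag.norm_apply_self_eq_one hV, one_mul]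

/-- If two density matrices with equal, diagonal, nondegenerate partial traces are
related by a local unitary `U ⊗ V`, then their entries have equal moduli. -/
theorem local_unitary_equiv_entry_moduli {α β : Type*}
    [Fintype α] [Fintype β] [DecidableEq α] [DecidableEq β]
    (σ τ : Matrix (α × β) (α × β) ℂ)
    (hσ : σ.PosSemidef) (hσtr : σ.trace = 1)
    (hτ : τ.PosSemidef) (hτtr : τ.trace = 1)
    (heq2 : ptrace2 τ = ptrace2 σ) (heq1 : ptrace1 τ = ptrace1 σ)
    (hdiag2 : (ptrace2 σ).IsDiag) (hdiag1 : (ptrace1 σ).IsDiag)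
    (hre2 : ∀ i, ((ptrace2 σ) i i).im = 0) (hre1 : ∀ k, ((ptrace1 σ) k k).im = 0)
    (hnd2 : ∀ i j, i ≠ j → (ptrace2 σ) i i ≠ (ptrace2 σ) j j)
    (hnd1 : ∀ k l, k ≠ l → (ptrace1 σ) k k ≠ (ptrace1 σ) l l)
    (U : Matrix α α ℂ) (V : Matrix β β ℂ)
    (hU : Uᴴ * U = 1) (hU' : U * Uᴴ = 1) (hV : Vᴴ * V = 1) (hV' : V * Vᴴ = 1)
    (hτσ : τ = (U ⊗ₖ V) * σ * (U ⊗ₖ V)ᴴ) :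
    ∀ (i j : α) (k l : β),
      ‖τ (i, k) (j, l)‖ = ‖σ (i, k) (j, l)‖ :=
  local_unitary_equiv_entry_moduli_general σ τ heq2 heq1 hdiag2 hdiag1 hnd2 hnd1 U V hU hV hτσ
end

section
/- Let λ₁, λ₂, λ₃ be reals with 1 ≥ λ₁ ≥ λ₂ ≥ λ₃ > 1/2 and λ₁ + λ₂ + λ₃ ≤ 2. Let y and z be the three-qubit vectors with all phases zero: y_{klm} = 0 for k+l+m odd, y₀₀₀ = √(2(λ₁+λ₂+λ₃−1))/2, y₀₁₁ = √(2(λ₁−λ₂−λ₃+1))/2, y₁₀₁ = √(2(−λ₁+λ₂−λ₃+1))/2, y₁₁₀ = √(2(−λ₁−λ₂+λ₃+1))/2; z_{klm} = 0 for k+l+m even, z₀₀₁ = √(2(λ₁+λ₂−λ₃))/2, z₀₁₀ = √(2(λ₁−λ₂+λ₃))/2, z₁₀₀ = √(2(−λ₁+λ₂+λ₃))/2, z₁₁₁ = √(2(−λ₁−λ₂−λ₃+2))/2. Then y and z define the same local states on each of the three qubits, namely ρ_i^y = ρ_i^z = diag(λ_i, 1 − λ_i) for i = 1, 2, 3, yet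 y and z are not equivalent under local unitary transformations: there do NOT exist 2×2 unitary matrices u₁, u₂, u₃ with (u₁ ⊗ u₂ ⊗ u₃) * p_y * (u₁ ⊗ u₂ ⊗ u₃)ᴴ = p_z, where u₁ ⊗ u₂ ⊗ u₃ is the matrix on Fin 2 × Fin 2 × Fin 2 with entries (u₁ ⊗ u₂ ⊗ u₃) (k,l,m) (k',l',m') = u₁ k k' · u₂ l l' · u₃ m m'. -/
open Matrix

/-- Outer-product matrix `p_x` of a three-qubit vector. -/
noncomputable def outer (x : Fin 2 × Fin 2 × Fin 2 → ℂ) :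
    Matrix (Fin 2 × Fin 2 × Fin 2) (Fin 2 × Fin 2 × Fin 2) ℂ :=
  Matrix.of fun p q => x p * star (x q)

/-- Triple Kronecker product of three `2 × 2` matrices. -/
noncomputable def kron3 (u1 u2 u3 : Matrix (Fin 2) (Fin 2) ℂ) :
    Matrix (Fin 2 × Fin 2 × Fin 2) (Fin 2 × Fin 2 × Fin 2) ℂ :=
  Matrix.of fun p q => u1 p.1 q.1 * u2 p.2.1 q.2.1 * u3 p.2.2 q.2.2

/-- The first solution `y` (all phases zero), supported on even indices. -/
noncomputable def ySol (l1 l2 l3 : ℝ) : Fin 2 × Fin 2 × Fin 2 → ℂ := fun v =>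
  ![![![((Real.sqrt (2 * (l1 + l2 + l3 - 1)) / 2 : ℝ) : ℂ), 0],
     ![0, ((Real.sqrt (2 * (l1 - l2 - l3 + 1)) / 2 : ℝ) : ℂ)]],
    ![![0, ((Real.sqrt (2 * (-l1 + l2 - l3 + 1)) / 2 : ℝ) : ℂ)],
     ![((Real.sqrt (2 * (-l1 - l2 + l3 + 1)) / 2 : ℝ) : ℂ), 0]]] v.1 v.2.1 v.2.2

/-- The second solution `z` (all phases zero), supported on odd indices. -/
noncomputable def zSol (l1 l2 l3 : ℝ) : Fin 2 × Fin 2 × Fin 2 → ℂ := fun v =>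
  ![![![0, ((Real.sqrt (2 * (l1 + l2 - l3)) / 2 : ℝ) : ℂ)],
     ![((Real.sqrt (2 * (l1 - l2 + l3)) / 2 : ℝ) : ℂ), 0]],
    ![![((Real.sqrt (2 * (-l1 + l2 + l3)) / 2 : ℝ) : ℂ), 0],
     ![0, ((Real.sqrt (2 * (-l1 - l2 - l3 + 2)) / 2 : ℝ) : ℂ)]]] v.1 v.2.1 v.2.2


section Aux

lemma outer_mulVec (M : Matrix (Fin 2 × Fin 2 × Fin 2) (Fin 2 × Fin 2 × Fin 2) ℂ)
    (x : Fin 2 × Fin 2 × Fin 2 → ℂ) :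
    M * outer x * Mᴴ = outer (M.mulVec x) := by
  ext p q
  simp only [outer, Matrix.mul_apply, Matrix.of_apply, conjTranspose_apply, mulVec, dotProduct,
    star_sum, star_mul', Finset.sum_mul, Finset.mul_sum]
  refine Finset.sum_congr rfl fun s _ => Finset.sum_congr rfl fun r _ => by ring

noncomputable def B2 (u v : Matrix (Fin 2) (Fin 2) ℂ) : Matrix (Fin 2 × Fin 2) (Fin 2 × Fin 2) ℂ :=
  Matrix.of fun p q => u p.1 q.1 * v p.2 q.2

noncomputable def A1 (x : Fin 2 × Fin 2 × Fin 2 → ℂ) : Matrix (Fin 2) (Fin 2 × Fin 2) ℂ :=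
  Matrix.of fun a lm => x (a, lm.1, lm.2)

noncomputable def A2 (x : Fin 2 × Fin 2 × Fin 2 → ℂ) : Matrix (Fin 2) (Fin 2 × Fin 2) ℂ :=
  Matrix.of fun a km => x (km.1, a, km.2)

noncomputable def A3 (x : Fin 2 × Fin 2 × Fin 2 → ℂ) : Matrix (Fin 2) (Fin 2 × Fin 2) ℂ :=
  Matrix.of fun a kl => x (kl.1, kl.2, a)

lemma rho1_eq (x : Fin 2 × Fin 2 × Fin 2 → ℂ) : rho1 x = A1 x * (A1 x)ᴴ := by
  ext a b
  simp [rho1, A1, Matrix.mul_apply, conjTranspose_apply, Fintype.sum_prod_type]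

lemma rho2_eq (x : Fin 2 × Fin 2 × Fin 2 → ℂ) : rho2 x = A2 x * (A2 x)ᴴ := by
  ext a b
  simp [rho2, A2, Matrix.mul_apply, conjTranspose_apply, Fintype.sum_prod_type]

lemma rho3_eq (x : Fin 2 × Fin 2 × Fin 2 → ℂ) : rho3 x = A3 x * (A3 x)ᴴ := by
  ext a b
  simp [rho3, A3, Matrix.mul_apply, conjTranspose_apply, Fintype.sum_prod_type]

lemma B2_unitary (u v : Matrix (Fin 2) (Fin 2) ℂ) (hu : uᴴ * u = 1) (hv : vᴴ * v = 1) :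
    (B2 u v)ᴴ * B2 u v = 1 := by
  ext p q
  have h1 := congrFun (congrFun hu p.1) q.1
  have h2 := congrFun (congrFun hv p.2) q.2
  simp only [Matrix.mul_apply, conjTranspose_apply, Matrix.one_apply] at h1 h2 ⊢
  simp only [B2, Matrix.of_apply, Fintype.sum_prod_type, star_mul']
  calc (∑ a : Fin 2, ∑ b : Fin 2, (star (u a p.1) * star (v b p.2)) * (u a q.1 * v b q.2))
      = (∑ a : Fin 2, star (u a p.1) * u a q.1) * (∑ b : Fin 2, star (v b p.2) * v b q.2) := by
        rw [Finset.sum_mul_sum]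
        exact Finset.sum_congr rfl fun a _ => Finset.sum_congr rfl fun b _ => by ring
    _ = _ := by
        rw [h1, h2]
        by_cases h1' : p.1 = q.1 <;> by_cases h2' : p.2 = q.2 <;>
          simp [h1', h2', Prod.ext_iff]

lemma B2T_mul_B2TH (u v : Matrix (Fin 2) (Fin 2) ℂ)
    (hu : uᴴ * u = 1) (hv : vᴴ * v = 1) : (B2 u v)ᵀ * ((B2 u v)ᵀ)ᴴ = 1 := by
  have h : ((B2 u v)ᴴ * B2 u v)ᵀ = (1 : Matrix (Fin 2 × Fin 2) (Fin 2 × Fin 2) ℂ)ᵀ := by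
    rw [B2_unitary u v hu hv]
  rw [transpose_mul, transpose_one] at h
  have e : (B2 u v)ᴴᵀ = (B2 u v)ᵀᴴ := by
    ext p q; simp [conjTranspose_apply, transpose_apply]
  rwa [e] at h

lemma A1_mulVec (u1 u2 u3 : Matrix (Fin 2) (Fin 2) ℂ) (x : Fin 2 × Fin 2 × Fin 2 → ℂ) :
    A1 ((kron3 u1 u2 u3).mulVec x) = u1 * A1 x * (B2 u2 u3)ᵀ := by
  ext a lm
  simp only [A1, Matrix.of_apply, mulVec, dotProduct, kron3, Matrix.mul_apply,
    transpose_apply, B2, Fintype.sum_prod_type, Finset.sum_mul, Finset.mul_sum,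
    Fin.sum_univ_two]
  ring

lemma A2_mulVec (u1 u2 u3 : Matrix (Fin 2) (Fin 2) ℂ) (x : Fin 2 × Fin 2 × Fin 2 → ℂ) :
    A2 ((kron3 u1 u2 u3).mulVec x) = u2 * A2 x * (B2 u1 u3)ᵀ := by
  ext a lm
  simp only [A2, Matrix.of_apply, mulVec, dotProduct, kron3, Matrix.mul_apply,
    transpose_apply, B2, Fintype.sum_prod_type, Finset.sum_mul, Finset.mul_sum,
    Fin.sum_univ_two]
  ring

lemma A3_mulVec (u1 u2 u3 : Matrix (Fin 2) (Fin 2) ℂ) (x : Fin 2 × Fin 2 × Fin 2 → ℂ) :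
    A3 ((kron3 u1 u2 u3).mulVec x) = u3 * A3 x * (B2 u1 u2)ᵀ := by
  ext a lm
  simp only [A3, Matrix.of_apply, mulVec, dotProduct, kron3, Matrix.mul_apply,
    transpose_apply, B2, Fintype.sum_prod_type, Finset.sum_mul, Finset.mul_sum,
    Fin.sum_univ_two]
  ring

lemma rho1_kron (u1 u2 u3 : Matrix (Fin 2) (Fin 2) ℂ) (h2 : u2ᴴ * u2 = 1) (h3 : u3ᴴ * u3 = 1)
    (x : Fin 2 × Fin 2 × Fin 2 → ℂ) :
    rho1 ((kron3 u1 u2 u3).mulVec x) = u1 * rho1 x * u1ᴴ := by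
  rw [rho1_eq, rho1_eq, A1_mulVec]
  simp only [conjTranspose_mul, Matrix.mul_assoc]
  rw [← Matrix.mul_assoc ((B2 u2 u3)ᵀ), B2T_mul_B2TH u2 u3 h2 h3, Matrix.one_mul]

lemma rho2_kron (u1 u2 u3 : Matrix (Fin 2) (Fin 2) ℂ) (h1 : u1ᴴ * u1 = 1) (h3 : u3ᴴ * u3 = 1)
    (x : Fin 2 × Fin 2 × Fin 2 → ℂ) :
    rho2 ((kron3 u1 u2 u3).mulVec x) = u2 * rho2 x * u2ᴴ := by
  rw [rho2_eq, rho2_eq, A2_mulVec]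
  simp only [conjTranspose_mul, Matrix.mul_assoc]
  rw [← Matrix.mul_assoc ((B2 u1 u3)ᵀ), B2T_mul_B2TH u1 u3 h1 h3, Matrix.one_mul]

lemma rho3_kron (u1 u2 u3 : Matrix (Fin 2) (Fin 2) ℂ) (h1 : u1ᴴ * u1 = 1) (h2 : u2ᴴ * u2 = 1)
    (x : Fin 2 × Fin 2 × Fin 2 → ℂ) :
    rho3 ((kron3 u1 u2 u3).mulVec x) = u3 * rho3 x * u3ᴴ := by
  rw [rho3_eq, rho3_eq, A3_mulVec]
  simp only [conjTranspose_mul, Matrix.mul_assoc]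
  rw [← Matrix.mul_assoc ((B2 u1 u2)ᵀ), B2T_mul_B2TH u1 u2 h1 h2, Matrix.one_mul]

lemma rho1_congr {x x' : Fin 2 × Fin 2 × Fin 2 → ℂ} (h : outer x = outer x') :
    rho1 x = rho1 x' := by
  ext a b
  simp only [rho1, Matrix.of_apply]
  refine Finset.sum_congr rfl fun l _ => Finset.sum_congr rfl fun m _ => ?_
  have := congrFun (congrFun h (a, l, m)) (b, l, m)
  simpa [outer] using this

lemma rho2_congr {x x' : Fin 2 × Fin 2 × Fin 2 → ℂ} (h : outer x = outer x') :
    rho2 x = rho2 x' := by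
  ext a b
  simp only [rho2, Matrix.of_apply]
  refine Finset.sum_congr rfl fun k _ => Finset.sum_congr rfl fun m _ => ?_
  have := congrFun (congrFun h (k, a, m)) (k, b, m)
  simpa [outer] using this

lemma rho3_congr {x x' : Fin 2 × Fin 2 × Fin 2 → ℂ} (h : outer x = outer x') :
    rho3 x = rho3 x' := by
  ext a b
  simp only [rho3, Matrix.of_apply]
  refine Finset.sum_congr rfl fun k _ => Finset.sum_congr rfl fun l _ => ?_
  have := congrFun (congrFun h (k, l, a)) (k, l, b)
  simpa [outer] using this

/-- A unitary conjugating `diag (lam, 1-lam)` to itself with `lam > 1/2` is diagonal. -/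
lemma unitary_diag (lam : ℝ) (hl : 1 / 2 < lam) (u : Matrix (Fin 2) (Fin 2) ℂ)
    (hu : uᴴ * u = 1)
    (h : u * !![(lam : ℂ), 0; 0, 1 - (lam : ℂ)] * uᴴ = !![(lam : ℂ), 0; 0, 1 - (lam : ℂ)]) :
    u 0 1 = 0 ∧ u 1 0 = 0 := by
  have hc : u * !![(lam : ℂ), 0; 0, 1 - (lam : ℂ)]
      = !![(lam : ℂ), 0; 0, 1 - (lam : ℂ)] * u := by
    have h' := congrArg (fun M => M * u) h
    simpa only [Matrix.mul_assoc, hu, Matrix.mul_one] using h'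
  have hne : ((1 : ℂ) - 2 * (lam : ℂ)) ≠ 0 := by
    intro hcon
    have := congrArg Complex.re hcon
    simp [Complex.sub_re, Complex.mul_re] at this
    linarith
  constructor
  · have e := congrFun (congrFun hc 0) 1
    simp [Matrix.mul_apply, Fin.sum_univ_two] at e
    have h0 : ((1 : ℂ) - 2 * (lam : ℂ)) * u 0 1 = 0 := by linear_combination e
    rcases mul_eq_zero.mp h0 with h' | h'
    · exact absurd h' hne
    · exact h'
  · have e := congrFun (congrFun hc 1) 0
    simp [Matrix.mul_apply, Fin.sum_univ_two] at e
    have h0 : ((1 : ℂ) - 2 * (lam : ℂ)) * u 1 0 = 0 := by linear_combination - e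
    rcases mul_eq_zero.mp h0 with h' | h'
    · exact absurd h' hne
    · exact h'

end Aux

set_option maxHeartbeats 2000000 in
/-- The pure three-qubit states `y` and `z` define the same local states on each qubit,
yet are not equivalent under local unitary transformations. -/
theorem three_qubit_pure_not_locally_unitarily_equivalent (l1 l2 l3 : ℝ)
    (hl1 : l1 ≤ 1) (h12 : l2 ≤ l1) (h23 : l3 ≤ l2) (hl3 : 1 / 2 < l3)
    (hsum : l1 + l2 + l3 ≤ 2) :
    rho1 (ySol l1 l2 l3) = !![(l1 : ℂ), 0; 0, 1 - (l1 : ℂ)] ∧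
    rho2 (ySol l1 l2 l3) = !![(l2 : ℂ), 0; 0, 1 - (l2 : ℂ)] ∧
    rho3 (ySol l1 l2 l3) = !![(l3 : ℂ), 0; 0, 1 - (l3 : ℂ)] ∧
    rho1 (zSol l1 l2 l3) = !![(l1 : ℂ), 0; 0, 1 - (l1 : ℂ)] ∧
    rho2 (zSol l1 l2 l3) = !![(l2 : ℂ), 0; 0, 1 - (l2 : ℂ)] ∧
    rho3 (zSol l1 l2 l3) = !![(l3 : ℂ), 0; 0, 1 - (l3 : ℂ)] ∧
    ¬ ∃ (u1 u2 u3 : Matrix (Fin 2) (Fin 2) ℂ),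
        u1ᴴ * u1 = 1 ∧ u1 * u1ᴴ = 1 ∧ u2ᴴ * u2 = 1 ∧ u2 * u2ᴴ = 1 ∧
        u3ᴴ * u3 = 1 ∧ u3 * u3ᴴ = 1 ∧
        kron3 u1 u2 u3 * outer (ySol l1 l2 l3) * (kron3 u1 u2 u3)ᴴ
          = outer (zSol l1 l2 l3) := by
  have t1 : (0:ℝ) ≤ 2 * (l1 + l2 + l3 - 1) := by nlinarith
  have t2 : (0:ℝ) ≤ 2 * (l1 - l2 - l3 + 1) := by nlinarith
  have t3 : (0:ℝ) ≤ 2 * (-l1 + l2 - l3 + 1) := by nlinarith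
  have t4 : (0:ℝ) ≤ 2 * (-l1 - l2 + l3 + 1) := by nlinarith
  have s1 : (0:ℝ) ≤ 2 * (l1 + l2 - l3) := by nlinarith
  have s2 : (0:ℝ) ≤ 2 * (l1 - l2 + l3) := by nlinarith
  have s3 : (0:ℝ) ≤ 2 * (-l1 + l2 + l3) := by nlinarith
  have s4 : (0:ℝ) ≤ 2 * (-l1 - l2 - l3 + 2) := by nlinarith
  have hy1 : rho1 (ySol l1 l2 l3) = !![(l1 : ℂ), 0; 0, 1 - (l1 : ℂ)] := by 
    ext i j
    fin_cases i <;> fin_cases j <;>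
      · simp only [rho1, rho2, rho3, ySol, zSol, Matrix.of_apply, Fin.sum_univ_two,
          Fin.zero_eta, Fin.mk_one, Matrix.cons_val_zero, Matrix.cons_val_one,
          Matrix.head_cons, Fin.isValue, mul_zero, zero_mul, star_zero, add_zero, zero_add,
          Complex.star_def, Complex.conj_ofReal, Matrix.cons_val', Matrix.empty_val',
          Matrix.cons_val_fin_one, Matrix.vecHead, map_zero]
        try simp only [← Complex.ofReal_mul, ← Complex.ofReal_add, ← Complex.ofReal_one,
          ← Complex.ofReal_sub, Complex.ofReal_inj]
        try nlinarith [Real.mul_self_sqrt t1, Real.mul_self_sqrt t2, Real.mul_self_sqrt t3,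
          Real.mul_self_sqrt t4, Real.mul_self_sqrt s1, Real.mul_self_sqrt s2,
          Real.mul_self_sqrt s3, Real.mul_self_sqrt s4]
  have hy2 : rho2 (ySol l1 l2 l3) = !![(l2 : ℂ), 0; 0, 1 - (l2 : ℂ)] := by 
    ext i j
    fin_cases i <;> fin_cases j <;>
      · simp only [rho1, rho2, rho3, ySol, zSol, Matrix.of_apply, Fin.sum_univ_two,
          Fin.zero_eta, Fin.mk_one, Matrix.cons_val_zero, Matrix.cons_val_one,
          Matrix.head_cons, Fin.isValue, mul_zero, zero_mul, star_zero, add_zero, zero_add,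
          Complex.star_def, Complex.conj_ofReal, Matrix.cons_val', Matrix.empty_val',
          Matrix.cons_val_fin_one, Matrix.vecHead, map_zero]
        try simp only [← Complex.ofReal_mul, ← Complex.ofReal_add, ← Complex.ofReal_one,
          ← Complex.ofReal_sub, Complex.ofReal_inj]
        try nlinarith [Real.mul_self_sqrt t1, Real.mul_self_sqrt t2, Real.mul_self_sqrt t3,
          Real.mul_self_sqrt t4, Real.mul_self_sqrt s1, Real.mul_self_sqrt s2,
          Real.mul_self_sqrt s3, Real.mul_self_sqrt s4]
  have hy3 : rho3 (ySol l1 l2 l3) = !![(l3 : ℂ), 0; 0, 1 - (l3 : ℂ)] := by 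
    ext i j
    fin_cases i <;> fin_cases j <;>
      · simp only [rho1, rho2, rho3, ySol, zSol, Matrix.of_apply, Fin.sum_univ_two,
          Fin.zero_eta, Fin.mk_one, Matrix.cons_val_zero, Matrix.cons_val_one,
          Matrix.head_cons, Fin.isValue, mul_zero, zero_mul, star_zero, add_zero, zero_add,
          Complex.star_def, Complex.conj_ofReal, Matrix.cons_val', Matrix.empty_val',
          Matrix.cons_val_fin_one, Matrix.vecHead, map_zero]
        try simp only [← Complex.ofReal_mul, ← Complex.ofReal_add, ← Complex.ofReal_one,
          ← Complex.ofReal_sub, Complex.ofReal_inj]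
        try nlinarith [Real.mul_self_sqrt t1, Real.mul_self_sqrt t2, Real.mul_self_sqrt t3,
          Real.mul_self_sqrt t4, Real.mul_self_sqrt s1, Real.mul_self_sqrt s2,
          Real.mul_self_sqrt s3, Real.mul_self_sqrt s4]
  have hz1 : rho1 (zSol l1 l2 l3) = !![(l1 : ℂ), 0; 0, 1 - (l1 : ℂ)] := by 
    ext i j
    fin_cases i <;> fin_cases j <;>
      · simp only [rho1, rho2, rho3, ySol, zSol, Matrix.of_apply, Fin.sum_univ_two,
          Fin.zero_eta, Fin.mk_one, Matrix.cons_val_zero, Matrix.cons_val_one,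
          Matrix.head_cons, Fin.isValue, mul_zero, zero_mul, star_zero, add_zero, zero_add,
          Complex.star_def, Complex.conj_ofReal, Matrix.cons_val', Matrix.empty_val',
          Matrix.cons_val_fin_one, Matrix.vecHead, map_zero]
        try simp only [← Complex.ofReal_mul, ← Complex.ofReal_add, ← Complex.ofReal_one,
          ← Complex.ofReal_sub, Complex.ofReal_inj]
        try nlinarith [Real.mul_self_sqrt t1, Real.mul_self_sqrt t2, Real.mul_self_sqrt t3,
          Real.mul_self_sqrt t4, Real.mul_self_sqrt s1, Real.mul_self_sqrt s2,
          Real.mul_self_sqrt s3, Real.mul_self_sqrt s4]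
  have hz2 : rho2 (zSol l1 l2 l3) = !![(l2 : ℂ), 0; 0, 1 - (l2 : ℂ)] := by 
    ext i j
    fin_cases i <;> fin_cases j <;>
      · simp only [rho1, rho2, rho3, ySol, zSol, Matrix.of_apply, Fin.sum_univ_two,
          Fin.zero_eta, Fin.mk_one, Matrix.cons_val_zero, Matrix.cons_val_one,
          Matrix.head_cons, Fin.isValue, mul_zero, zero_mul, star_zero, add_zero, zero_add,
          Complex.star_def, Complex.conj_ofReal, Matrix.cons_val', Matrix.empty_val',
          Matrix.cons_val_fin_one, Matrix.vecHead, map_zero]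
        try simp only [← Complex.ofReal_mul, ← Complex.ofReal_add, ← Complex.ofReal_one,
          ← Complex.ofReal_sub, Complex.ofReal_inj]
        try nlinarith [Real.mul_self_sqrt t1, Real.mul_self_sqrt t2, Real.mul_self_sqrt t3,
          Real.mul_self_sqrt t4, Real.mul_self_sqrt s1, Real.mul_self_sqrt s2,
          Real.mul_self_sqrt s3, Real.mul_self_sqrt s4]
  have hz3 : rho3 (zSol l1 l2 l3) = !![(l3 : ℂ), 0; 0, 1 - (l3 : ℂ)] := by 
    ext i j
    fin_cases i <;> fin_cases j <;>
      · simp only [rho1, rho2, rho3, ySol, zSol, Matrix.of_apply, Fin.sum_univ_two,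
          Fin.zero_eta, Fin.mk_one, Matrix.cons_val_zero, Matrix.cons_val_one,
          Matrix.head_cons, Fin.isValue, mul_zero, zero_mul, star_zero, add_zero, zero_add,
          Complex.star_def, Complex.conj_ofReal, Matrix.cons_val', Matrix.empty_val',
          Matrix.cons_val_fin_one, Matrix.vecHead, map_zero]
        try simp only [← Complex.ofReal_mul, ← Complex.ofReal_add, ← Complex.ofReal_one,
          ← Complex.ofReal_sub, Complex.ofReal_inj]
        try nlinarith [Real.mul_self_sqrt t1, Real.mul_self_sqrt t2, Real.mul_self_sqrt t3,
          Real.mul_self_sqrt t4, Real.mul_self_sqrt s1, Real.mul_self_sqrt s2,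
          Real.mul_self_sqrt s3, Real.mul_self_sqrt s4]
  refine ⟨hy1, hy2, hy3, hz1, hz2, hz3, ?_⟩
  rintro ⟨u1, u2, u3, h1a, h1b, h2a, h2b, h3a, h3b, heq⟩
  rw [outer_mulVec] at heq
  set w := (kron3 u1 u2 u3).mulVec (ySol l1 l2 l3) with hwdef
  have hl2 : 1 / 2 < l2 := lt_of_lt_of_le hl3 h23
  have hl1' : 1 / 2 < l1 := lt_of_lt_of_le hl2 h12
  have hd1 := unitary_diag l1 hl1' u1 h1a (by
    rw [← hy1, ← rho1_kron u1 u2 u3 h2a h3a, rho1_congr heq, hz1, hy1])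
  have hd2 := unitary_diag l2 hl2 u2 h2a (by
    rw [← hy2, ← rho2_kron u1 u2 u3 h1a h3a, rho2_congr heq, hz2, hy2])
  have hd3 := unitary_diag l3 hl3 u3 h3a (by
    rw [← hy3, ← rho3_kron u1 u2 u3 h1a h2a, rho3_congr heq, hz3, hy3])
  have hw001 : w ((0 : Fin 2), (0 : Fin 2), (1 : Fin 2)) = 0 := by
    simp only [hwdef, mulVec, dotProduct, kron3, Matrix.of_apply, Fintype.sum_prod_type,
      Fin.sum_univ_two]
    simp [ySol, hd1.1, hd2.1, hd3.2]
  have hzpos : 0 < Real.sqrt (2 * (l1 + l2 - l3)) / 2 := by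
    have h0 : (0:ℝ) < 2 * (l1 + l2 - l3) := by nlinarith
    positivity
  have hkey := congrFun (congrFun heq ((0 : Fin 2), (0 : Fin 2), (1 : Fin 2)))
    ((0 : Fin 2), (0 : Fin 2), (1 : Fin 2))
  simp only [outer, Matrix.of_apply, hw001, zero_mul] at hkey
  have hzval : zSol l1 l2 l3 ((0 : Fin 2), (0 : Fin 2), (1 : Fin 2))
      = ((Real.sqrt (2 * (l1 + l2 - l3)) / 2 : ℝ) : ℂ) := by
    simp [zSol]
  rw [hzval] at hkey
  rw [Complex.star_def, Complex.conj_ofReal, ← Complex.ofReal_mul] at hkey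
  have hfin : (Real.sqrt (2 * (l1 + l2 - l3)) / 2) * (Real.sqrt (2 * (l1 + l2 - l3)) / 2)
      = 0 := by
    exact_mod_cast hkey.symm
  nlinarith
end

section
/- For a real number p with 0 ≤ p < 1, let B_p be the 2×2 Hermitian matrix [[1 − 2p/3, p/3], [p/3, 2p/3]] and let C be the 2×2 Hermitian matrix [[1/3, 1/3], [1/3, 2/3]]. Then the largest eigenvalue of B_p is (1 + √(1 − (4/3)·p·(2 − (5/3)·p)))/2, the largest eigenvalue of C is (1 + √5/3)/2, and for every p with 0 ≤ p < 1/5 the largest eigenvalue of C is strictly smaller than the largest eigenvalue of B_p. (Hence an individual measurement outcome of Alice can make Bob's local state strictly more mixed.) -/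
/-!
The larger eigenvalue of a `2 × 2` Hermitian matrix is `(t + √(t² - 4d)) / 2`, where `t` and `d`
are its trace and determinant. Both `B_p` and `C` have trace `1`, while `det B_p = 2p/3 - 5p²/9`
and `det C = 1/9`; the discriminants differ by
`1 - (4/3)p(2 - (5/3)p) - 5/9 = (4/9)(1 - p)(1 - 5p)`, which is positive for `p < 1/5`.
-/

open Matrix

namespace Matrix.IsHermitian

variable {𝕜 n : Type*} [RCLike 𝕜] [Fintype n] [DecidableEq n] {A : Matrix n n 𝕜}

lemma trace_eq_sum_of_perm_eq_eigenvalues (hA : A.IsHermitian) {μ : n → ℝ} {e : Equiv.Perm n}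
    (he : ∀ i, μ (e i) = hA.eigenvalues i) : A.trace = ∑ i, (μ i : 𝕜) := by
  rw [hA.trace_eq_sum_eigenvalues, ← Equiv.sum_comp e fun i ↦ (μ i : 𝕜)]
  simp only [he]

lemma det_eq_prod_of_perm_eq_eigenvalues (hA : A.IsHermitian) {μ : n → ℝ} {e : Equiv.Perm n}
    (he : ∀ i, μ (e i) = hA.eigenvalues i) : A.det = ∏ i, (μ i : 𝕜) := by
  rw [hA.det_eq_prod_eigenvalues, ← Equiv.prod_comp e fun i ↦ (μ i : 𝕜)]
  simp only [he]

end Matrix.IsHermitian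

lemma Real.eq_add_sqrt_discrim_div_two_of_le {a b : ℝ} (hba : b ≤ a) :
    a = (a + b + √((a + b) ^ 2 - 4 * (a * b))) / 2 := by
  rw [show (a + b) ^ 2 - 4 * (a * b) = (a - b) ^ 2 by ring, Real.sqrt_sq (sub_nonneg.2 hba)]
  ring

lemma Matrix.IsHermitian.fin_two_antitone_zero_eq {𝕜 : Type*} [RCLike 𝕜]
    {A : Matrix (Fin 2) (Fin 2) 𝕜} (hA : A.IsHermitian) {μ : Fin 2 → ℝ} (hμ : Antitone μ)
    {e : Equiv.Perm (Fin 2)} (he : ∀ i, μ (e i) = hA.eigenvalues i) {t d : ℝ}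
    (ht : A.trace = t) (hd : A.det = d) :
    μ 0 = (t + √(t ^ 2 - 4 * d)) / 2 := by
  have hsum : μ 0 + μ 1 = t := by
    have := (hA.trace_eq_sum_of_perm_eq_eigenvalues he).symm.trans ht
    rw [Fin.sum_univ_two] at this
    exact_mod_cast this
  have hprod : μ 0 * μ 1 = d := by
    have := (hA.det_eq_prod_of_perm_eq_eigenvalues he).symm.trans hd
    rw [Fin.prod_univ_two] at this
    exact_mod_cast this
  rw [← hsum, ← hprod]
  exact Real.eq_add_sqrt_discrim_div_two_of_le (hμ (Fin.zero_le 1))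

theorem measurement_can_increase_mixedness_general (p : ℝ)
    (B C : Matrix (Fin 2) (Fin 2) ℂ)
    (hBdef : B = !![((1 - 2 * p / 3 : ℝ) : ℂ), ((p / 3 : ℝ) : ℂ);
                    ((p / 3 : ℝ) : ℂ), ((2 * p / 3 : ℝ) : ℂ)])
    (hCdef : C = !![((1 / 3 : ℝ) : ℂ), ((1 / 3 : ℝ) : ℂ);
                    ((1 / 3 : ℝ) : ℂ), ((2 / 3 : ℝ) : ℂ)])
    (hB : B.IsHermitian) (hC : C.IsHermitian)
    (μ ν : Fin 2 → ℝ) (hμ : Antitone μ) (hν : Antitone ν)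
    (hμp : ∃ e : Equiv.Perm (Fin 2), ∀ i, μ (e i) = hB.eigenvalues i)
    (hνp : ∃ e : Equiv.Perm (Fin 2), ∀ i, ν (e i) = hC.eigenvalues i) :
    μ 0 = (1 + Real.sqrt (1 - 4 / 3 * p * (2 - 5 / 3 * p))) / 2 ∧
    ν 0 = (1 + Real.sqrt 5 / 3) / 2 ∧
    (p < 1 / 5 → ν 0 < μ 0) := by
  obtain ⟨e, he⟩ := hμp
  obtain ⟨f, hf⟩ := hνp
  have hBt : B.trace = ((1 : ℝ) : ℂ) := by rw [hBdef, trace_fin_two_of]; push_cast; ring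
  have hBd : B.det = ((2 * p / 3 - 5 * p ^ 2 / 9 : ℝ) : ℂ) := by
    rw [hBdef, det_fin_two_of]; push_cast; ring
  have hCt : C.trace = ((1 : ℝ) : ℂ) := by rw [hCdef, trace_fin_two_of]; push_cast; ring
  have hCd : C.det = ((1 / 9 : ℝ) : ℂ) := by rw [hCdef, det_fin_two_of]; push_cast; ring
  -- `t` and `d` are passed explicitly: inferring them from `hBt`, `hCt`, ... would unfold the
  -- real literals while matching `Complex.ofReal` against `RCLike.ofReal`.
  have hμ0 : μ 0 = (1 + √(1 - 4 / 3 * p * (2 - 5 / 3 * p))) / 2 := by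
    rw [hB.fin_two_antitone_zero_eq hμ he (t := 1) (d := 2 * p / 3 - 5 * p ^ 2 / 9) hBt hBd]
    ring_nf
  have hν0 : ν 0 = (1 + √5 / 3) / 2 := by
    rw [hC.fin_two_antitone_zero_eq hν hf (t := 1) (d := 1 / 9) hCt hCd,
      show (1 : ℝ) ^ 2 - 4 * (1 / 9) = 5 / 3 ^ 2 by norm_num, Real.sqrt_div' _ (by positivity),
      Real.sqrt_sq (by norm_num)]
  refine ⟨hμ0, hν0, fun hp => ?_⟩
  have hdisc : √5 / 3 < √(1 - 4 / 3 * p * (2 - 5 / 3 * p)) := by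
    rw [← Real.sqrt_sq (show (0 : ℝ) ≤ 3 by norm_num), ← Real.sqrt_div' _ (by positivity)]
    exact Real.sqrt_lt_sqrt (by norm_num)
      (by nlinarith [mul_pos (sub_pos.2 hp) (by linarith : (0 : ℝ) < 1 - p)])
  rw [hμ0, hν0]
  linarith

/-- An individual measurement outcome of Alice can make Bob's local state strictly more
mixed: the largest eigenvalue of `B_p` is `(1 + √(1 - (4/3)p(2 - (5/3)p)))/2`, the
largest eigenvalue of `C` is `(1 + √5/3)/2`, and for `p < 1/5` the latter is strictly
smaller. -/
theorem measurement_can_increase_mixedness (p : ℝ) (hp0 : 0 ≤ p) (hp1 : p < 1)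
    (B C : Matrix (Fin 2) (Fin 2) ℂ)
    (hBdef : B = !![((1 - 2 * p / 3 : ℝ) : ℂ), ((p / 3 : ℝ) : ℂ);
                    ((p / 3 : ℝ) : ℂ), ((2 * p / 3 : ℝ) : ℂ)])
    (hCdef : C = !![((1 / 3 : ℝ) : ℂ), ((1 / 3 : ℝ) : ℂ);
                    ((1 / 3 : ℝ) : ℂ), ((2 / 3 : ℝ) : ℂ)])
    (hB : B.IsHermitian) (hC : C.IsHermitian)
    (μ ν : Fin 2 → ℝ) (hμ : Antitone μ) (hν : Antitone ν)
    (hμp : ∃ e : Equiv.Perm (Fin 2), ∀ i, μ (e i) = hB.eigenvalues i)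
    (hνp : ∃ e : Equiv.Perm (Fin 2), ∀ i, ν (e i) = hC.eigenvalues i) :
    μ 0 = (1 + Real.sqrt (1 - 4 / 3 * p * (2 - 5 / 3 * p))) / 2 ∧
    ν 0 = (1 + Real.sqrt 5 / 3) / 2 ∧
    (p < 1 / 5 → ν 0 < μ 0) :=
  measurement_can_increase_mixedness_general p B C hBdef hCdef hB hC μ ν hμ hν hμp hνp
end
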